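/- arXiv:2311.16850 — 10 statements merged into one kernel-verified Lean document; each statement's English description precedes it below -/
import Mathlib

section
/- Let {x^k} and {d^k} be sequences in ℝⁿ such that ∑_{k=1}^∞ ‖x^{k+1} − x^k‖·‖d^k‖ < ∞. If x̄ ∈ ℝⁿ is an accumulation point of {x^k} (i.e., the limit of some subsequence of {x^k}) and the origin 0 is an accumulation point of {d^k}, then there exists a strictly increasing map φ : ℕ → ℕ such that x^{φ(j)} → x̄ and d^{φ(j)} → 0 as j → ∞. -/
open Filter Topology

/-- If ∑ ‖x^{k+1} − x^k‖·‖d^k‖ < ∞, x̄ is an accumulation point of {x^k}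
and 0 is an accumulation point of {d^k}, then there is a common subsequence along which
x^k → x̄ and d^k → 0. -/
theorem stmt_0 {n : ℕ} (x d : ℕ → EuclideanSpace ℝ (Fin n))
    (hsum : Summable (fun k => ‖x (k + 1) - x k‖ * ‖d k‖))
    (xbar : EuclideanSpace ℝ (Fin n))
    (hx : ∃ φ : ℕ → ℕ, StrictMono φ ∧ Tendsto (fun j => x (φ j)) atTop (𝓝 xbar))
    (hd : ∃ φ : ℕ → ℕ, StrictMono φ ∧ Tendsto (fun j => d (φ j)) atTop (𝓝 0)) :
    ∃ φ : ℕ → ℕ, StrictMono φ ∧ Tendsto (fun j => x (φ j)) atTop (𝓝 xbar) ∧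
      Tendsto (fun j => d (φ j)) atTop (𝓝 0) := by
  classical
  obtain ⟨φ, hφmono, hφlim⟩ := hx
  obtain ⟨ψ, hψmono, hψlim⟩ := hd
  set f : ℕ → ℝ := fun k => ‖x (k + 1) - x k‖ * ‖d k‖ with hfdef
  set T : ℕ → ℝ := fun N => ∑' i, f (i + N) with hTdef
  have hfnn : ∀ k, 0 ≤ f k := fun k => mul_nonneg (norm_nonneg _) (norm_nonneg _)
  have hTnn : ∀ N, 0 ≤ T N := fun N => tsum_nonneg (fun i => hfnn _)
  have hT0 : Tendsto T atTop (𝓝 0) := tendsto_sum_nat_add f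
  set ε : ℕ → ℝ := fun j => Real.sqrt (T (φ j)) + 1 / (j + 1) with hεdef
  have hεpos : ∀ j, 0 < ε j := by
    intro j
    have h1 : (0:ℝ) < 1 / ((j:ℝ) + 1) := by positivity
    have := Real.sqrt_nonneg (T (φ j))
    simp only [hεdef]
    positivity
  have hTφ0 : Tendsto (fun j => T (φ j)) atTop (𝓝 0) :=
    hT0.comp hφmono.tendsto_atTop
  have hsqrt0 : Tendsto (fun j => Real.sqrt (T (φ j))) atTop (𝓝 0) := by
    have := (Real.continuous_sqrt.tendsto 0).comp hTφ0
    simpa [Function.comp_def] using this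
  have hε0 : Tendsto ε atTop (𝓝 0) := by
    have h2 : Tendsto (fun j : ℕ => 1 / ((j : ℝ) + 1)) atTop (𝓝 0) :=
      tendsto_one_div_add_atTop_nhds_zero_nat
    have h3 := hsqrt0.add h2
    rw [add_zero] at h3
    exact h3
  -- existence of indices where d is small
  have hdsmall : ∀ c : ℝ, 0 < c → ∀ N : ℕ, ∃ m, N ≤ m ∧ ‖d m‖ ≤ c := by
    intro c hc N
    have hev : ∀ᶠ m in atTop, ‖d (ψ m)‖ < c := by
      have h := hψlim
      rw [tendsto_zero_iff_norm_tendsto_zero] at h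
      exact h.eventually (eventually_lt_nhds hc)
    obtain ⟨M, hM⟩ := hev.exists_forall_of_atTop
    exact ⟨ψ (max M N), le_trans (le_max_right M N) (hψmono.id_le _),
      (hM (max M N) (le_max_left M N)).le⟩
  have hP : ∀ j, ∃ m, φ j ≤ m ∧ ‖d m‖ ≤ ε j := fun j => hdsmall _ (hεpos j) (φ j)
  set K : ℕ → ℕ := fun j => Nat.find (hP j) with hKdef
  have hKspec : ∀ j, φ j ≤ K j ∧ ‖d (K j)‖ ≤ ε j := fun j => Nat.find_spec (hP j)
  have hKmin : ∀ j, ∀ i, φ j ≤ i → i < K j → ε j < ‖d i‖ := by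
    intro j i hi hiK
    have h := Nat.find_min (hP j) hiK
    push_neg at h
    exact h hi
  -- key bound
  have hxbound : ∀ j, ‖x (K j) - x (φ j)‖ ≤ Real.sqrt (T (φ j)) := by
    intro j
    have htel : x (K j) - x (φ j) = ∑ i ∈ Finset.Ico (φ j) (K j), (x (i + 1) - x i) := by
      rw [Finset.sum_Ico_eq_sub _ (hKspec j).1, Finset.sum_range_sub, Finset.sum_range_sub]
      abel
    have h1 : ‖x (K j) - x (φ j)‖ ≤ ∑ i ∈ Finset.Ico (φ j) (K j), ‖x (i + 1) - x i‖ := by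
      rw [htel]; exact norm_sum_le _ _
    have h2 : ∀ i ∈ Finset.Ico (φ j) (K j), ‖x (i + 1) - x i‖ ≤ f i / ε j := by
      intro i hi
      rw [Finset.mem_Ico] at hi
      have hdi : ε j < ‖d i‖ := hKmin j i hi.1 hi.2
      rw [le_div_iff₀ (hεpos j)]
      calc ‖x (i + 1) - x i‖ * ε j ≤ ‖x (i + 1) - x i‖ * ‖d i‖ :=
            mul_le_mul_of_nonneg_left hdi.le (norm_nonneg _)
        _ = f i := rfl
    have h3 : ∑ i ∈ Finset.Ico (φ j) (K j), f i ≤ T (φ j) := by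
      have hre : ∑ i ∈ Finset.Ico (φ j) (K j), f i
          = ∑ i ∈ Finset.range (K j - φ j), f (i + φ j) := by
        rw [Finset.sum_Ico_eq_sum_range]
        exact Finset.sum_congr rfl (fun i _ => by rw [add_comm])
      rw [hre]
      exact Summable.sum_le_tsum _ (fun i _ => hfnn _)
        ((summable_nat_add_iff (φ j)).mpr hsum)
    have h5 : T (φ j) / ε j ≤ Real.sqrt (T (φ j)) := by
      rw [div_le_iff₀ (hεpos j)]
      calc T (φ j) = Real.sqrt (T (φ j)) * Real.sqrt (T (φ j)) :=
            (Real.mul_self_sqrt (hTnn _)).symm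
        _ ≤ Real.sqrt (T (φ j)) * ε j := by
            apply mul_le_mul_of_nonneg_left _ (Real.sqrt_nonneg _)
            simp only [hεdef]
            have : (0:ℝ) < 1 / ((j:ℝ) + 1) := by positivity
            linarith
    calc ‖x (K j) - x (φ j)‖ ≤ ∑ i ∈ Finset.Ico (φ j) (K j), ‖x (i + 1) - x i‖ := h1
      _ ≤ ∑ i ∈ Finset.Ico (φ j) (K j), f i / ε j := Finset.sum_le_sum h2
      _ = (∑ i ∈ Finset.Ico (φ j) (K j), f i) / ε j := by rw [Finset.sum_div]
      _ ≤ T (φ j) / ε j := by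
          exact div_le_div_of_nonneg_right h3 (hεpos j).le
      _ ≤ Real.sqrt (T (φ j)) := h5
  -- limits along K
  have hxK : Tendsto (fun j => x (K j)) atTop (𝓝 xbar) := by
    rw [tendsto_iff_norm_sub_tendsto_zero]
    apply squeeze_zero (fun j => norm_nonneg _)
      (g := fun j => Real.sqrt (T (φ j)) + ‖x (φ j) - xbar‖)
    · intro j
      calc ‖x (K j) - xbar‖ = ‖(x (K j) - x (φ j)) + (x (φ j) - xbar)‖ := by rw [sub_add_sub_cancel]
        _ ≤ ‖x (K j) - x (φ j)‖ + ‖x (φ j) - xbar‖ := norm_add_le _ _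
        _ ≤ Real.sqrt (T (φ j)) + ‖x (φ j) - xbar‖ := by
            have := hxbound j; linarith
    · have h2 : Tendsto (fun j => ‖x (φ j) - xbar‖) atTop (𝓝 0) := by
        rw [← tendsto_iff_norm_sub_tendsto_zero]; exact hφlim
      simpa using hsqrt0.add h2
  have hdK : Tendsto (fun j => d (K j)) atTop (𝓝 0) := by
    rw [tendsto_zero_iff_norm_tendsto_zero]
    exact squeeze_zero (fun j => norm_nonneg _) (fun j => (hKspec j).2) hε0
  -- extract strictly monotone subsequence
  obtain ⟨ρ, hρmono, hKρmono⟩ :=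
    strictMono_subseq_of_id_le (u := K) (fun j => (hφmono.id_le j).trans (hKspec j).1)
  exact ⟨K ∘ ρ, hKρmono, hxK.comp hρmono.tendsto_atTop, hdK.comp hρmono.tendsto_atTop⟩
end

section
/- Let {x^k} be a bounded sequence in ℝⁿ satisfying ‖x^{k+1} − x^k‖ → 0 as k → ∞ (the Ostrowski condition). Then the set of accumulation points of {x^k} is nonempty, compact, and connected in ℝⁿ. -/
open Filter Topology Metric

/-- For a bounded sequence in ℝⁿ satisfying the Ostrowski condition
‖x^{k+1} − x^k‖ → 0, the set of accumulation points is nonempty, compact and connected. -/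
theorem stmt_1 {n : ℕ} (x : ℕ → EuclideanSpace ℝ (Fin n))
    (hbd : Bornology.IsBounded (Set.range x))
    (hostr : Tendsto (fun k => ‖x (k + 1) - x k‖) atTop (𝓝 0))
    (A : Set (EuclideanSpace ℝ (Fin n)))
    (hA : A = {a : EuclideanSpace ℝ (Fin n) |
      ∃ φ : ℕ → ℕ, StrictMono φ ∧ Tendsto (fun j => x (φ j)) atTop (𝓝 a)}) :
    A.Nonempty ∧ IsCompact A ∧ IsConnected A := by
  -- A equals the set of cluster points
  have hAcl : A = {a | MapClusterPt a atTop x} := by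
    rw [hA]; ext a; constructor
    · rintro ⟨φ, hφ, hlim⟩
      exact MapClusterPt.of_comp (φ := φ) hφ.tendsto_atTop (Tendsto.mapClusterPt hlim)
    · intro h
      obtain ⟨ψ, hψ, hlim⟩ := TopologicalSpace.FirstCountableTopology.tendsto_subseq h
      exact ⟨ψ, hψ, hlim⟩
  -- Nonempty
  have hne : A.Nonempty := by
    obtain ⟨a, -, φ, hφ, hlim⟩ := tendsto_subseq_of_bounded hbd (fun k => Set.mem_range_self k)
    exact ⟨a, by rw [hA]; exact ⟨φ, hφ, hlim⟩⟩
  -- Compact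
  have hclosed : IsClosed A := by
    rw [hAcl]; exact isClosed_setOf_clusterPt
  have hbdA : Bornology.IsBounded A := by
    refine (hbd.closure).subset ?_
    intro a ha
    rw [hA] at ha
    obtain ⟨φ, hφ, hlim⟩ := ha
    exact mem_closure_of_tendsto hlim (Eventually.of_forall fun j => Set.mem_range_self _)
  have hcomp : IsCompact A := isCompact_of_isClosed_isBounded hclosed hbdA
  refine ⟨hne, hcomp, hne, ?_⟩
  -- Preconnected
  intro u v hu hv huv hAu hAv
  by_contra hcon
  rw [Set.not_nonempty_iff_eq_empty] at hcon
  set A₁ : Set (EuclideanSpace ℝ (Fin n)) := A \ v with hA₁def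
  set A₂ : Set (EuclideanSpace ℝ (Fin n)) := A \ u with hA₂def
  have hA1c : IsCompact A₁ := by
    rw [hA₁def, Set.diff_eq]; exact hcomp.inter_right hv.isClosed_compl
  have hA2c : IsCompact A₂ := by
    rw [hA₂def, Set.diff_eq]; exact hcomp.inter_right hu.isClosed_compl
  have hA1ne : A₁.Nonempty := by
    obtain ⟨a, haA, hau⟩ := hAu
    refine ⟨a, haA, fun hav => ?_⟩
    exact absurd (Set.eq_empty_iff_forall_notMem.mp hcon a ⟨haA, hau, hav⟩) (fun h => h)
  have hA2ne : A₂.Nonempty := by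
    obtain ⟨a, haA, hav⟩ := hAv
    refine ⟨a, haA, fun hau => ?_⟩
    exact absurd (Set.eq_empty_iff_forall_notMem.mp hcon a ⟨haA, hau, hav⟩) (fun h => h)
  have hsplit : A = A₁ ∪ A₂ := by
    ext a; constructor
    · intro ha
      by_cases hav : a ∈ v
      · right; exact ⟨ha, fun hau => Set.eq_empty_iff_forall_notMem.mp hcon a ⟨ha, hau, hav⟩⟩
      · left; exact ⟨ha, hav⟩
    · rintro (⟨ha, -⟩ | ⟨ha, -⟩) <;> exact ha
  -- separation δ
  obtain ⟨a₀, ha₀, hmin⟩ := hA1c.exists_isMinOn hA1ne (continuous_infDist_pt A₂).continuousOn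
  set δ : ℝ := infDist a₀ A₂ with hδdef
  have ha₀nv : a₀ ∉ A₂ := fun h => h.2 (by
    rcases hsplit ▸ ha₀.1, ha₀ with ⟨h1, h2⟩
    -- a₀ ∈ A₁ means a₀ ∉ v; if a₀ ∈ A₂ then a₀ ∉ u; but a₀ ∈ A ⊆ u ∪ v
    rcases huv ha₀.1 with hu' | hv'
    · exact hu'
    · exact absurd hv' ha₀.2)
  have hδpos : 0 < δ := by
    rw [hδdef]
    exact (hA2c.isClosed.notMem_iff_infDist_pos hA2ne).mp ha₀nv
  have hsep : ∀ a₁ ∈ A₁, ∀ a₂ ∈ A₂, δ ≤ dist a₁ a₂ := by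
    intro a₁ h1 a₂ h2
    calc δ ≤ infDist a₁ A₂ := hmin h1
    _ ≤ dist a₁ a₂ := infDist_le_dist_of_mem h2
  set f : ℕ → ℝ := fun k => infDist (x k) A₁ with hfdef
  -- frequently close to A₁
  have hfreq1 : ∀ M : ℕ, ∃ k ≥ M, f k < δ / 3 := by
    intro M
    obtain ⟨a, haA1⟩ := hA1ne
    have : a ∈ A := hsplit ▸ Or.inl haA1
    rw [hA] at this
    obtain ⟨φ, hφ, hlim⟩ := this
    have := (Metric.tendsto_atTop.mp hlim) (δ/3) (by positivity)
    obtain ⟨N, hN⟩ := this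
    refine ⟨φ (max N M), le_trans (le_max_right N M) (hφ.le_apply), ?_⟩
    calc f (φ (max N M)) ≤ dist (x (φ (max N M))) a := infDist_le_dist_of_mem haA1
    _ < δ / 3 := hN _ (le_max_left N M)
  -- frequently far from A₁ (close to A₂)
  have hfreq2 : ∀ M : ℕ, ∃ k ≥ M, 2 * δ / 3 < f k := by
    intro M
    obtain ⟨a, haA2⟩ := hA2ne
    have : a ∈ A := hsplit ▸ Or.inr haA2
    rw [hA] at this
    obtain ⟨φ, hφ, hlim⟩ := this
    obtain ⟨N, hN⟩ := (Metric.tendsto_atTop.mp hlim) (δ/3) (by positivity)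
    set k := φ (max N M)
    refine ⟨k, le_trans (le_max_right N M) (hφ.le_apply), ?_⟩
    obtain ⟨a₁, ha₁, heq⟩ := hA1c.exists_infDist_eq_dist hA1ne (x k)
    rw [hfdef]
    simp only []
    rw [heq]
    have h1 : δ ≤ dist a₁ a := hsep a₁ ha₁ a haA2
    have h2 : dist (x k) a < δ / 3 := hN _ (le_max_left N M)
    have := dist_triangle a₁ (x k) a
    rw [dist_comm a₁ (x k)] at this
    linarith
  -- eventually small steps
  obtain ⟨N₀, hN₀⟩ := eventually_atTop.mp (hostr.eventually (gt_mem_nhds (show (0:ℝ) < δ/3 by positivity)))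
  have hstep : ∀ k ≥ N₀, f (k+1) ≤ f k + δ / 3 := by
    intro k hk
    calc f (k+1) ≤ f k + dist (x (k+1)) (x k) := infDist_le_infDist_add_dist
    _ ≤ f k + δ/3 := by
        have := hN₀ k hk
        rw [dist_eq_norm]
        linarith
  -- crossing: frequently f k ∈ [δ/3, 2δ/3]
  have hcross : ∀ M : ℕ, ∃ k ≥ M, δ/3 ≤ f k ∧ f k ≤ 2*δ/3 := by
    intro M
    obtain ⟨k₁, hk₁M, hk₁⟩ := hfreq1 (max M N₀)
    obtain ⟨k₂, hk₂k, hk₂⟩ := hfreq2 (k₁ + 1)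
    have hex : ∃ j, δ/3 ≤ f (k₁ + 1 + j) := by
      refine ⟨k₂ - (k₁ + 1), ?_⟩
      rw [Nat.add_sub_cancel' hk₂k]
      linarith
    set j₀ := Nat.find hex with hj₀def
    have hj₀ : δ/3 ≤ f (k₁ + 1 + j₀) := Nat.find_spec hex
    have hprev : f (k₁ + j₀) < δ/3 := by
      rcases Nat.eq_zero_or_pos j₀ with h0 | hpos
      · rw [h0]; simpa using hk₁
      · have := Nat.find_min hex (m := j₀ - 1) (by omega)
        push_neg at this
        have heq : k₁ + 1 + (j₀ - 1) = k₁ + j₀ := by omega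
        rwa [heq] at this
    refine ⟨k₁ + 1 + j₀, by omega, hj₀, ?_⟩
    have hge : k₁ + j₀ ≥ N₀ := by
      have := le_trans (le_max_right M N₀) hk₁M
      omega
    have := hstep (k₁ + j₀) hge
    have heq : k₁ + j₀ + 1 = k₁ + 1 + j₀ := by omega
    rw [heq] at this
    linarith
  -- extract subsequence of crossing points
  have hfreqc : ∃ᶠ k in atTop, δ/3 ≤ f k ∧ f k ≤ 2*δ/3 :=
    frequently_atTop.mpr fun M => (hcross M).imp fun k h => ⟨h.1, h.2.1, h.2.2⟩
  obtain ⟨φ, hφmono, hφspec⟩ := Filter.extraction_of_frequently_atTop hfreqc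
  obtain ⟨c, -, ψ, hψmono, hclim⟩ := tendsto_subseq_of_bounded hbd
    (fun j => Set.mem_range_self (φ j))
  have hcA : c ∈ A := by
    rw [hA]
    exact ⟨φ ∘ ψ, hφmono.comp hψmono, hclim⟩
  have hfc : δ/3 ≤ infDist c A₁ ∧ infDist c A₁ ≤ 2*δ/3 := by
    have hcont : Tendsto (fun j => f (φ (ψ j))) atTop (𝓝 (infDist c A₁)) :=
      ((continuous_infDist_pt A₁).tendsto c).comp hclim
    constructor
    · exact ge_of_tendsto hcont (Eventually.of_forall fun j => (hφspec (ψ j)).1)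
    · exact le_of_tendsto hcont (Eventually.of_forall fun j => (hφspec (ψ j)).2)
  rcases hsplit ▸ hcA with hc1 | hc2
  · have : infDist c A₁ = 0 := infDist_zero_of_mem hc1
    linarith [hfc.1]
  · obtain ⟨a₁, ha₁, heq⟩ := hA1c.exists_infDist_eq_dist hA1ne c
    have : δ ≤ dist c a₁ := by rw [dist_comm]; exact hsep a₁ ha₁ c hc2
    rw [heq] at hfc
    linarith [hfc.2]
end

section
/- Let {x^k} be a sequence in ℝⁿ satisfying ‖x^{k+1} − x^k‖ → 0 as k → ∞ (the Ostrowski condition). If {x^k} has an isolated accumulation point x̄, i.e., there is ε > 0 such that x̄ is the only accumulation point of {x^k} in the ball B(x̄, ε), then x^k → x̄ as k → ∞. -/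
open Filter Topology

/-- If a sequence in ℝⁿ satisfies the Ostrowski condition
‖x^{k+1} − x^k‖ → 0 and has an isolated accumulation point x̄, then x^k → x̄. -/
theorem stmt_2 {n : ℕ} (x : ℕ → EuclideanSpace ℝ (Fin n))
    (hostr : Tendsto (fun k => ‖x (k + 1) - x k‖) atTop (𝓝 0))
    (xbar : EuclideanSpace ℝ (Fin n))
    (hacc : ∃ φ : ℕ → ℕ, StrictMono φ ∧ Tendsto (fun j => x (φ j)) atTop (𝓝 xbar))
    (hiso : ∃ ε > (0 : ℝ), ∀ a ∈ Metric.ball xbar ε,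
      (∃ φ : ℕ → ℕ, StrictMono φ ∧ Tendsto (fun j => x (φ j)) atTop (𝓝 a)) → a = xbar) :
    Tendsto x atTop (𝓝 xbar) := by
  classical
  obtain ⟨ε, hε, hiso⟩ := hiso
  rw [Metric.tendsto_atTop]
  intro δ hδ
  set r := min δ (ε/2) with hr
  have hr0 : 0 < r := lt_min hδ (by linarith)
  have hrε : r ≤ ε/2 := min_le_right _ _
  suffices h : ∀ᶠ k in atTop, dist (x k) xbar < r by
    obtain ⟨N, hN⟩ := eventually_atTop.mp h
    exact ⟨N, fun k hk => lt_of_lt_of_le (hN k hk) (min_le_left _ _)⟩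
  by_contra hcon
  rw [Filter.not_eventually] at hcon
  have B : ∀ N, ∃ k ≥ N, r ≤ dist (x k) xbar := by
    intro N
    obtain ⟨k, hk2, hk1⟩ := ((eventually_ge_atTop N).and_frequently hcon).exists
    exact ⟨k, hk2, not_lt.mp hk1⟩
  obtain ⟨φ, hφ, hφt⟩ := hacc
  have A : ∀ N, ∃ k ≥ N, dist (x k) xbar < r/2 := by
    intro N
    have h1 : ∀ᶠ j in atTop, dist (x (φ j)) xbar < r/2 := by
      have := (Metric.tendsto_atTop.mp hφt) (r/2) (by linarith)
      rw [eventually_atTop]; exact this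
    have h2 : ∀ᶠ j in atTop, φ j ≥ N := hφ.tendsto_atTop.eventually_ge_atTop N
    obtain ⟨j, hj1, hj2⟩ := (h1.and h2).exists
    exact ⟨φ j, hj2, hj1⟩
  obtain ⟨N0, hN0⟩ := (Metric.tendsto_atTop.mp hostr (r/2) (by linarith))
  have hstep : ∀ k ≥ N0, dist (x (k+1)) (x k) < r/2 := by
    intro k hk
    have h := hN0 k hk
    rw [Real.dist_eq, sub_zero] at h
    calc dist (x (k+1)) (x k) = ‖x (k+1) - x k‖ := dist_eq_norm _ _
      _ ≤ |‖x (k+1) - x k‖| := le_abs_self _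
      _ < r/2 := h
  have freq : ∀ N, ∃ m ≥ N, r/2 ≤ dist (x m) xbar ∧ dist (x m) xbar < r := by
    intro N
    obtain ⟨k, hk, hkd⟩ := A (max N N0)
    obtain ⟨l, hl, hld⟩ := B k
    have hQ : ∃ j, r/2 ≤ dist (x (k + j)) xbar :=
      ⟨l - k, by rw [Nat.add_sub_cancel' hl]; linarith⟩
    set j0 := Nat.find hQ with hj0
    have hspec := Nat.find_spec hQ
    have hj0p : 0 < j0 := by
      rcases Nat.eq_zero_or_pos j0 with h | h
      · exfalso
        rw [← hj0, h, Nat.add_zero] at hspec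
        linarith
      · exact h
    have hprev : ¬ r/2 ≤ dist (x (k + (j0 - 1))) xbar := Nat.find_min hQ (by omega)
    push_neg at hprev
    refine ⟨k + j0, by calc N ≤ max N N0 := le_max_left _ _
      _ ≤ k := hk
      _ ≤ k + j0 := Nat.le_add_right _ _, hspec, ?_⟩
    have hkN0 : k + (j0 - 1) ≥ N0 :=
      le_trans (le_max_right N N0) (le_trans hk (Nat.le_add_right _ _))
    have hs := hstep (k + (j0-1)) hkN0
    have heq : k + (j0 - 1) + 1 = k + j0 := by omega
    calc dist (x (k + j0)) xbar
        ≤ dist (x (k+j0)) (x (k + (j0-1))) + dist (x (k+(j0-1))) xbar := dist_triangle _ _ _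
      _ < r/2 + r/2 := by rw [← heq]; exact add_lt_add hs hprev
      _ = r := by ring
  have freq' : ∃ᶠ m in atTop, r/2 ≤ dist (x m) xbar ∧ dist (x m) xbar < r :=
    frequently_atTop.mpr freq
  obtain ⟨ψ, hψ, hψp⟩ := Filter.extraction_of_frequently_atTop freq'
  have hcmp : IsCompact (Metric.closedBall xbar r) := isCompact_closedBall _ _
  have hmem : ∀ j, x (ψ j) ∈ Metric.closedBall xbar r :=
    fun j => Metric.mem_closedBall.mpr (le_of_lt (hψp j).2)
  obtain ⟨a, ha, σ, hσ, hσt⟩ := hcmp.tendsto_subseq hmem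
  have haacc : ∃ φ : ℕ → ℕ, StrictMono φ ∧ Tendsto (fun j => x (φ j)) atTop (𝓝 a) :=
    ⟨ψ ∘ σ, hψ.comp hσ, hσt⟩
  have hd : r/2 ≤ dist a xbar := by
    have hten : Tendsto (fun j => dist (x (ψ (σ j))) xbar) atTop (𝓝 (dist a xbar)) :=
      hσt.dist tendsto_const_nhds
    exact ge_of_tendsto hten (Eventually.of_forall fun j => (hψp (σ j)).1)
  have hball : a ∈ Metric.ball xbar ε := by
    rw [Metric.mem_ball]
    calc dist a xbar ≤ r := Metric.mem_closedBall.mp ha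
      _ ≤ ε/2 := hrε
      _ < ε := by linarith
  have heqa := hiso a hball haacc
  rw [heqa] at hd
  simp at hd
  linarith
end

section
/- Let f : ℝⁿ → ℝ be a C¹-smooth function and let {x^k} ⊂ ℝⁿ be a sequence satisfying: (H1) there exists σ > 0 such that f(x^k) − f(x^{k+1}) ≥ σ‖∇f(x^k)‖·‖x^{k+1} − x^k‖ for all sufficiently large k; and (H2) for all sufficiently large k, f(x^{k+1}) = f(x^k) implies x^{k+1} = x^k. If x̄ is an accumulation point of {x^k} and f satisfies the KL property at x̄, then x^k → x̄ as k → ∞. -/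
open Filter Topology MeasureTheory

/-- Under the primary descent condition (H1) and the complementary descent
condition (H2), if x̄ is an accumulation point of {x^k} and f satisfies the KL property
at x̄, then x^k → x̄. -/
theorem stmt_3 {n : ℕ} (f : EuclideanSpace ℝ (Fin n) → ℝ) (hf : ContDiff ℝ 1 f)
    (x : ℕ → EuclideanSpace ℝ (Fin n))
    (hH1 : ∃ σ > (0 : ℝ), ∀ᶠ k in atTop,
      σ * (‖gradient f (x k)‖ * ‖x (k + 1) - x k‖) ≤ f (x k) - f (x (k + 1)))
    (hH2 : ∀ᶠ k in atTop, f (x (k + 1)) = f (x k) → x (k + 1) = x k)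
    (xbar : EuclideanSpace ℝ (Fin n))
    (hacc : ∃ φ : ℕ → ℕ, StrictMono φ ∧ Tendsto (fun j => x (φ j)) atTop (𝓝 xbar))
    (hKL : ∃ η > (0 : ℝ), ∃ U ∈ 𝓝 xbar, ∃ ψ : ℝ → ℝ,
      (∀ t ∈ Set.Ioo (0 : ℝ) η, 0 < ψ t) ∧ MonotoneOn ψ (Set.Ioo (0 : ℝ) η) ∧
      IntegrableOn (fun t => 1 / ψ t) (Set.Ioo (0 : ℝ) η) ∧
      ∀ y ∈ U, f xbar < f y → f y < f xbar + η → ψ (f y - f xbar) ≤ ‖gradient f y‖) :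
    Tendsto x atTop (𝓝 xbar) := by
  obtain ⟨σ, hσ, hH1'⟩ := hH1
  obtain ⟨φ, hφ, hlim⟩ := hacc
  obtain ⟨η, hη, U, hU, ψ, hψpos, hψmono, hψint, hKL'⟩ := hKL
  have hfc : Continuous f := hf.continuous
  set fbar := f xbar with hfbar
  obtain ⟨N₀, hN₀⟩ := eventually_atTop.mp (hH1'.and hH2)
  -- f (x k) is eventually nonincreasing
  have hstep : ∀ k, N₀ ≤ k → f (x (k + 1)) ≤ f (x k) := by
    intro k hk
    have h1 := (hN₀ k hk).1
    have h2 : 0 ≤ σ * (‖gradient f (x k)‖ * ‖x (k + 1) - x k‖) :=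
      mul_nonneg hσ.le (mul_nonneg (norm_nonneg _) (norm_nonneg _))
    linarith
  have hanti : ∀ k, N₀ ≤ k → ∀ l, k ≤ l → f (x l) ≤ f (x k) := by
    intro k hk l hl
    induction l, hl using Nat.le_induction with
    | base => exact le_rfl
    | succ l hl ih => exact le_trans (hstep l (hk.trans hl)) ih
  have hφtop : Tendsto φ atTop atTop := hφ.tendsto_atTop
  have hflim : Tendsto (fun j => f (x (φ j))) atTop (𝓝 fbar) :=
    (hfc.tendsto xbar).comp hlim
  have hge : ∀ k, N₀ ≤ k → fbar ≤ f (x k) := by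
    intro k hk
    refine le_of_tendsto hflim ?_
    filter_upwards [hφtop.eventually_ge_atTop k] with j hj
    exact hanti k hk (φ j) hj
  by_cases hA : ∃ k, N₀ ≤ k ∧ f (x k) = fbar
  · -- Case A: f is eventually equal to fbar, so the sequence is eventually constant
    obtain ⟨k₁, hk₁, hfk₁⟩ := hA
    have hconst : ∀ k, k₁ ≤ k → x k = x k₁ := by
      intro k hk
      induction k, hk using Nat.le_induction with
      | base => rfl
      | succ k hk ih =>
        have hk' : N₀ ≤ k := hk₁.trans hk
        have e1 : f (x k) = fbar :=
          le_antisymm (hfk₁ ▸ hanti k₁ hk₁ k hk) (hge k hk')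
        have e2 : f (x (k + 1)) = fbar :=
          le_antisymm (hfk₁ ▸ hanti k₁ hk₁ (k + 1) (hk.trans (Nat.le_succ k)))
            (hge _ (hk'.trans (Nat.le_succ k)))
        rw [(hN₀ k hk').2 (e2.trans e1.symm), ih]
    have hxk₁ : x k₁ = xbar := by
      refine tendsto_nhds_unique ?_ hlim
      refine Tendsto.congr' ?_ (tendsto_const_nhds : Tendsto (fun _ : ℕ => x k₁) atTop (𝓝 (x k₁)))
      filter_upwards [hφtop.eventually_ge_atTop k₁] with j hj
      exact (hconst (φ j) hj).symm
    refine Tendsto.congr' ?_ (tendsto_const_nhds : Tendsto (fun _ : ℕ => xbar) atTop (𝓝 xbar))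
    filter_upwards [eventually_ge_atTop k₁] with k hk
    rw [← hxk₁, ← hconst k hk]
  -- Case B: f (x k) > fbar for all k ≥ N₀
  push_neg at hA
  have hgt : ∀ k, N₀ ≤ k → fbar < f (x k) := fun k hk =>
    lt_of_le_of_ne (hge k hk) (Ne.symm (hA k hk))
  -- the primitive Φ of 1/ψ
  set Φ : ℝ → ℝ := fun t => ∫ s in Set.Ioc (0 : ℝ) t, 1 / ψ s with hΦdef
  have hψint' : IntegrableOn (fun t => 1 / ψ t) (Set.Icc (0 : ℝ) η) := by
    rw [integrableOn_Icc_iff_integrableOn_Ioo]; exact hψint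
  have hΦcont : ContinuousOn Φ (Set.Icc (0 : ℝ) η) :=
    intervalIntegral.continuousOn_primitive hψint'
  have hΦ0 : Φ 0 = 0 := by simp [hΦdef]
  have hΦnonneg : ∀ t : ℝ, t < η → 0 ≤ Φ t := by
    intro t ht
    apply setIntegral_nonneg measurableSet_Ioc
    intro s hs
    exact le_of_lt (one_div_pos.mpr (hψpos s ⟨hs.1, lt_of_le_of_lt hs.2 ht⟩))
  have hkey : ∀ a b : ℝ, 0 < a → a ≤ b → b < η → (b - a) / ψ b ≤ Φ b - Φ a := by
    intro a b ha hab hbη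
    have hbpos : (0 : ℝ) < b := ha.trans_le hab
    have hmemb : b ∈ Set.Ioo (0 : ℝ) η := ⟨hbpos, hbη⟩
    have hsub1 : Set.Ioc (0 : ℝ) a ⊆ Set.Ioo (0 : ℝ) η := fun s hs =>
      ⟨hs.1, lt_of_le_of_lt (hs.2.trans hab) hbη⟩
    have hsub2 : Set.Ioc a b ⊆ Set.Ioo (0 : ℝ) η := fun s hs =>
      ⟨ha.trans hs.1, lt_of_le_of_lt hs.2 hbη⟩
    have hint1 : IntegrableOn (fun t => 1 / ψ t) (Set.Ioc (0 : ℝ) a) := hψint.mono_set hsub1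
    have hint2 : IntegrableOn (fun t => 1 / ψ t) (Set.Ioc a b) := hψint.mono_set hsub2
    have hdisj : Disjoint (Set.Ioc (0 : ℝ) a) (Set.Ioc a b) := by
      rw [Set.disjoint_left]
      intro s hs1 hs2
      exact absurd hs2.1 (not_lt.mpr hs1.2)
    have hsplit : Φ b = Φ a + ∫ s in Set.Ioc a b, 1 / ψ s := by
      have h := setIntegral_union (μ := volume) (f := fun t => 1 / ψ t) hdisj
        measurableSet_Ioc hint1 hint2
      rw [Set.Ioc_union_Ioc_eq_Ioc ha.le hab] at h
      exact h
    have hconst : ∫ _ in Set.Ioc a b, (1 / ψ b) = (b - a) * (1 / ψ b) := by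
      rw [setIntegral_const, Real.volume_real_Ioc_of_le hab, smul_eq_mul]
    have hlower : (b - a) * (1 / ψ b) ≤ ∫ s in Set.Ioc a b, 1 / ψ s := by
      rw [← hconst]
      refine setIntegral_mono_on ?_ hint2 measurableSet_Ioc ?_
      · exact integrableOn_const measure_Ioc_lt_top.ne
      · intro s hs
        have hsmem : s ∈ Set.Ioo (0 : ℝ) η := hsub2 hs
        exact one_div_le_one_div_of_le (hψpos s hsmem) (hψmono hsmem hmemb hs.2)
    have : (b - a) / ψ b = (b - a) * (1 / ψ b) := by ring
    linarith
  -- limits along the subsequence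
  have hdlim : Tendsto (fun j => f (x (φ j)) - fbar) atTop (𝓝 0) := by
    simpa using hflim.sub (tendsto_const_nhds (x := fbar))
  have hΦlim : Tendsto (fun j => Φ (f (x (φ j)) - fbar)) atTop (𝓝 0) := by
    have h0 : (0 : ℝ) ∈ Set.Icc (0 : ℝ) η := Set.mem_Icc.mpr ⟨le_rfl, hη.le⟩
    have hc := (hΦcont 0 h0).tendsto
    rw [hΦ0] at hc
    refine hc.comp ?_
    refine tendsto_nhdsWithin_of_tendsto_nhds_of_eventually_within _ hdlim ?_
    filter_upwards [hφtop.eventually_ge_atTop N₀,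
      hflim.eventually_lt_const (lt_add_of_pos_right fbar hη)] with j hj1 hj2
    exact Set.mem_Icc.mpr ⟨sub_nonneg.mpr (hge _ hj1), by linarith⟩
  obtain ⟨ε, hε, hball⟩ := Metric.mem_nhds_iff.mp hU
  have hxlim : Tendsto (fun j => ‖x (φ j) - xbar‖) atTop (𝓝 0) := by
    have := (hlim.sub (tendsto_const_nhds (x := xbar))).norm
    simpa using this
  have hsum0 : Tendsto (fun j => ‖x (φ j) - xbar‖ + (1 / σ) * Φ (f (x (φ j)) - fbar))
      atTop (𝓝 0) := by
    have := hxlim.add (hΦlim.const_mul (1 / σ))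
    simpa using this
  obtain ⟨j₀, hj₀⟩ := (((hsum0.eventually_lt_const hε).and
    (hφtop.eventually_ge_atTop N₀)).and
    (hflim.eventually_lt_const (lt_add_of_pos_right fbar hη))).exists
  obtain ⟨⟨hδε, hk₀N⟩, hk₀η⟩ := hj₀
  set k₀ := φ j₀ with hk₀def
  clear_value k₀
  set δ := ‖x k₀ - xbar‖ + (1 / σ) * Φ (f (x k₀) - fbar) with hδdef
  clear_value δ
  have hdpos : ∀ k, k₀ ≤ k → 0 < f (x k) - fbar := fun k hk =>
    sub_pos.mpr (hgt k (hk₀N.trans hk))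
  have hdlt : ∀ k, k₀ ≤ k → f (x k) - fbar < η := by
    intro k hk
    have := hanti k₀ hk₀N k hk
    linarith
  -- the key step: invariant implies step bound and next invariant
  have hstep2 : ∀ k, k₀ ≤ k →
      ‖x k - xbar‖ + (1 / σ) * Φ (f (x k) - fbar) ≤ δ →
      ‖x (k + 1) - x k‖ ≤ (1 / σ) * (Φ (f (x k) - fbar) - Φ (f (x (k + 1)) - fbar)) ∧
      ‖x (k + 1) - xbar‖ + (1 / σ) * Φ (f (x (k + 1)) - fbar) ≤ δ := by
    intro k hk hinvk
    have hkN : N₀ ≤ k := hk₀N.trans hk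
    have hdk_pos : 0 < f (x k) - fbar := hdpos k hk
    have hdk_lt : f (x k) - fbar < η := hdlt k hk
    have hdk1_pos : 0 < f (x (k + 1)) - fbar := hdpos (k + 1) (hk.trans (Nat.le_succ k))
    have hdk1_le : f (x (k + 1)) - fbar ≤ f (x k) - fbar := by
      have := hstep k hkN; linarith
    have hΦk_nonneg : 0 ≤ Φ (f (x k) - fbar) := hΦnonneg _ hdk_lt
    have hxkU : x k ∈ U := by
      apply hball
      rw [Metric.mem_ball, dist_eq_norm]
      have : 0 ≤ (1 / σ) * Φ (f (x k) - fbar) :=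
        mul_nonneg (by positivity) hΦk_nonneg
      linarith
    have hKLk : ψ (f (x k) - fbar) ≤ ‖gradient f (x k)‖ :=
      hKL' (x k) hxkU (hgt k hkN) (by linarith)
    have hψk_pos : 0 < ψ (f (x k) - fbar) := hψpos _ ⟨hdk_pos, hdk_lt⟩
    have h1 : σ * (‖gradient f (x k)‖ * ‖x (k + 1) - x k‖) ≤ f (x k) - f (x (k + 1)) :=
      (hN₀ k hkN).1
    have hkeyk : (f (x k) - f (x (k + 1))) / ψ (f (x k) - fbar) ≤
        Φ (f (x k) - fbar) - Φ (f (x (k + 1)) - fbar) := by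
      have := hkey (f (x (k + 1)) - fbar) (f (x k) - fbar) hdk1_pos hdk1_le hdk_lt
      have heq : f (x k) - fbar - (f (x (k + 1)) - fbar) = f (x k) - f (x (k + 1)) := by ring
      rwa [heq] at this
    have h2 : f (x k) - f (x (k + 1)) ≤
        ψ (f (x k) - fbar) * (Φ (f (x k) - fbar) - Φ (f (x (k + 1)) - fbar)) := by
      rw [div_le_iff₀ hψk_pos] at hkeyk
      linarith [hkeyk]
    have h3 : ψ (f (x k) - fbar) * (σ * ‖x (k + 1) - x k‖) ≤
        ψ (f (x k) - fbar) * (Φ (f (x k) - fbar) - Φ (f (x (k + 1)) - fbar)) := by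
      have h4 : σ * (ψ (f (x k) - fbar) * ‖x (k + 1) - x k‖) ≤
          σ * (‖gradient f (x k)‖ * ‖x (k + 1) - x k‖) := by
        apply mul_le_mul_of_nonneg_left _ hσ.le
        exact mul_le_mul_of_nonneg_right hKLk (norm_nonneg _)
      nlinarith [h4, h1, h2]
    have h5 : σ * ‖x (k + 1) - x k‖ ≤ Φ (f (x k) - fbar) - Φ (f (x (k + 1)) - fbar) :=
      (mul_le_mul_iff_right₀ hψk_pos).mp h3
    have hstepbound : ‖x (k + 1) - x k‖ ≤
        (1 / σ) * (Φ (f (x k) - fbar) - Φ (f (x (k + 1)) - fbar)) := by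
      have h6 : ‖x (k + 1) - x k‖ = (1 / σ) * (σ * ‖x (k + 1) - x k‖) := by
        field_simp
      rw [h6]
      exact mul_le_mul_of_nonneg_left h5 (by positivity)
    refine ⟨hstepbound, ?_⟩
    have htri : ‖x (k + 1) - xbar‖ ≤ ‖x (k + 1) - x k‖ + ‖x k - xbar‖ :=
      norm_sub_le_norm_sub_add_norm_sub _ _ _
    have hexp : (1 / σ) * (Φ (f (x k) - fbar) - Φ (f (x (k + 1)) - fbar)) =
        (1 / σ) * Φ (f (x k) - fbar) - (1 / σ) * Φ (f (x (k + 1)) - fbar) := by ring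
    rw [hexp] at hstepbound
    linarith
  have hinv : ∀ k, k₀ ≤ k → ‖x k - xbar‖ + (1 / σ) * Φ (f (x k) - fbar) ≤ δ := by
    intro k hk
    induction k, hk using Nat.le_induction with
    | base => exact hδdef.ge
    | succ k hk ih => exact (hstep2 k hk ih).2
  have hstepbound : ∀ k, k₀ ≤ k → ‖x (k + 1) - x k‖ ≤
      (1 / σ) * (Φ (f (x k) - fbar) - Φ (f (x (k + 1)) - fbar)) := fun k hk =>
    (hstep2 k hk (hinv k hk)).1
  -- summability of step lengths
  have hsummable : Summable (fun m : ℕ => ‖x (k₀ + m + 1) - x (k₀ + m)‖) := by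
    apply summable_of_sum_range_le (c := (1 / σ) * Φ (f (x k₀) - fbar))
      (fun m => norm_nonneg _)
    intro m
    have hb : ∀ i ∈ Finset.range m, ‖x (k₀ + i + 1) - x (k₀ + i)‖ ≤
        (1 / σ) * Φ (f (x (k₀ + i)) - fbar) - (1 / σ) * Φ (f (x (k₀ + i + 1)) - fbar) := by
      intro i _
      have := hstepbound (k₀ + i) (Nat.le_add_right _ _)
      linarith [this]
    calc ∑ i ∈ Finset.range m, ‖x (k₀ + i + 1) - x (k₀ + i)‖
        ≤ ∑ i ∈ Finset.range m, ((1 / σ) * Φ (f (x (k₀ + i)) - fbar) -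
            (1 / σ) * Φ (f (x (k₀ + i + 1)) - fbar)) := Finset.sum_le_sum hb
      _ = (1 / σ) * Φ (f (x (k₀ + 0)) - fbar) - (1 / σ) * Φ (f (x (k₀ + m)) - fbar) :=
            Finset.sum_range_sub' (fun i => (1 / σ) * Φ (f (x (k₀ + i)) - fbar)) m
      _ ≤ (1 / σ) * Φ (f (x k₀) - fbar) := by
            have h1 : 0 ≤ Φ (f (x (k₀ + m)) - fbar) :=
              hΦnonneg _ (hdlt (k₀ + m) (Nat.le_add_right _ _))
            have h2 : 0 ≤ (1 / σ) * Φ (f (x (k₀ + m)) - fbar) :=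
              mul_nonneg (by positivity) h1
            have h3 : k₀ + 0 = k₀ := Nat.add_zero k₀
            rw [h3]
            linarith
  have hcauchy : CauchySeq (fun m => x (k₀ + m)) := by
    apply cauchySeq_of_summable_dist
    have heq : (fun m : ℕ => dist (x (k₀ + m)) (x (k₀ + (m + 1)))) =
        fun m : ℕ => ‖x (k₀ + m + 1) - x (k₀ + m)‖ := by
      funext m
      rw [dist_eq_norm, norm_sub_rev, Nat.add_assoc]
    exact heq ▸ hsummable
  obtain ⟨y, hy⟩ := cauchySeq_tendsto_of_complete hcauchy
  have hxy : Tendsto x atTop (𝓝 y) := by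
    have h1 : Tendsto (fun k => x (k₀ + (k - k₀))) atTop (𝓝 y) :=
      hy.comp (tendsto_sub_atTop_nat k₀)
    refine Tendsto.congr' ?_ h1
    filter_upwards [eventually_ge_atTop k₀] with k hk
    rw [Nat.add_sub_cancel' hk]
  have hyx : y = xbar := tendsto_nhds_unique (hxy.comp hφtop) hlim
  rwa [hyx] at hxy
end

section
/- Let f : ℝⁿ → ℝ be a C¹-smooth function and let sequences {x^k} ⊂ ℝⁿ, {τ_k} ⊂ [0, ∞), {d^k} ⊂ ℝⁿ satisfy x^{k+1} = x^k + τ_k d^k for all k. Assume there exist α, β > 0 such that for all sufficiently large k: x^{k+1} ≠ x^k, f(x^k) − f(x^{k+1}) ≥ β τ_k ‖d^k‖², and ‖∇f(x^k)‖ ≤ α‖d^k‖. Assume also that there is τ̄ > 0 with τ_k ≥ τ̄ for all sufficiently large k, that x̄ is an accumulation point of {x^k}, and that f satisfies the KL property at x̄ with ψ(t) = M t^q for some M > 0 and q ∈ (0, 1/2]. Then {x^k} converges linearly to x̄: there exist ρ > 0, c ∈ (0, 1), and N ∈ ℕ such that ‖x^k − x̄‖ ≤ ρ c^k for all k ≥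 N. -/
open Filter Topology

lemma aux_concave {q a b : ℝ} (hq0 : 0 < q) (hq1 : q < 1) (hb : 0 < b) (hba : b ≤ a) :
    (1 - q) * (a - b) ≤ a ^ q * (a ^ (1 - q) - b ^ (1 - q)) := by
  have ha : 0 < a := hb.trans_le hba
  set t := b / a with ht
  have ht0 : 0 ≤ t := by positivity
  have ht1 : t ≤ 1 := (div_le_one ha).2 hba
  have hgm : t ^ (1 - q) * (1:ℝ) ^ q ≤ (1 - q) * t + q * 1 :=
    Real.geom_mean_le_arith_mean2_weighted (by linarith) hq0.le ht0 zero_le_one (by ring)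
  have hbt : b = t * a := by rw [ht, div_mul_cancel₀ _ ha.ne']
  have hb1q : b ^ (1 - q) = t ^ (1 - q) * a ^ (1 - q) := by
    rw [hbt, Real.mul_rpow ht0 ha.le]
  have haa : a ^ (1 - q) * a ^ q = a := by
    rw [← Real.rpow_add ha]; norm_num
  have key : a ^ q * b ^ (1 - q) ≤ (1 - q) * b + q * a := by
    rw [hb1q]
    calc a ^ q * (t ^ (1 - q) * a ^ (1 - q)) = t ^ (1 - q) * (a ^ (1 - q) * a ^ q) := by ring
      _ = t ^ (1 - q) * a := by rw [haa]
      _ ≤ ((1 - q) * t + q * 1) * a := by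
          apply mul_le_mul_of_nonneg_right _ ha.le
          simpa using hgm
      _ = (1 - q) * (t * a) + q * a := by ring
      _ = (1 - q) * b + q * a := by rw [← hbt]
  have heq : a ^ q * (a ^ (1 - q) - b ^ (1 - q)) = a - a ^ q * b ^ (1 - q) := by
    rw [mul_sub, show a ^ q * a ^ (1-q) = a ^ (1-q) * a ^ q by ring, haa]
  rw [heq]; linarith

set_option maxHeartbeats 2000000 in
/-- Linear convergence of a linesearch-type sequence under the KL property
with exponent q ∈ (0, 1/2]. -/
theorem stmt_4 {n : ℕ} (f : EuclideanSpace ℝ (Fin n) → ℝ) (hf : ContDiff ℝ 1 f)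
    (x d : ℕ → EuclideanSpace ℝ (Fin n)) (τ : ℕ → ℝ) (hτnonneg : ∀ k, 0 ≤ τ k)
    (hiter : ∀ k, x (k + 1) = x k + τ k • d k)
    (α β : ℝ) (hα : 0 < α) (hβ : 0 < β)
    (hcond : ∀ᶠ k in atTop, x (k + 1) ≠ x k ∧
      β * τ k * ‖d k‖ ^ 2 ≤ f (x k) - f (x (k + 1)) ∧
      ‖gradient f (x k)‖ ≤ α * ‖d k‖)
    (hτbdd : ∃ τbar > (0 : ℝ), ∀ᶠ k in atTop, τbar ≤ τ k)
    (xbar : EuclideanSpace ℝ (Fin n))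
    (hacc : ∃ φ : ℕ → ℕ, StrictMono φ ∧ Tendsto (fun j => x (φ j)) atTop (𝓝 xbar))
    (M q : ℝ) (hM : 0 < M) (hq : q ∈ Set.Ioc (0 : ℝ) (1 / 2))
    (hKL : ∃ η > (0 : ℝ), ∃ U ∈ 𝓝 xbar, ∀ y ∈ U, f xbar < f y → f y < f xbar + η →
      M * (f y - f xbar) ^ q ≤ ‖gradient f y‖) :
    ∃ ρ > (0 : ℝ), ∃ c ∈ Set.Ioo (0 : ℝ) 1, ∃ N : ℕ, ∀ k ≥ N,
      ‖x k - xbar‖ ≤ ρ * c ^ k := by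
  obtain ⟨hq0, hq12⟩ := hq
  have hq1 : q < 1 := lt_of_le_of_lt hq12 (by norm_num)
  have h1q : (0:ℝ) < 1 - q := by linarith
  obtain ⟨τbar, hτbar, hτev⟩ := hτbdd
  obtain ⟨φ, hφ, hφt⟩ := hacc
  obtain ⟨η, hη, U, hU, hKLU⟩ := hKL
  obtain ⟨ε, hε, hball⟩ := Metric.mem_nhds_iff.1 hU
  obtain ⟨N₀, hN₀⟩ := eventually_atTop.1 (hcond.and hτev)
  set e : ℕ → ℝ := fun k => f (x k) - f xbar with he_def
  have he : ∀ k, e k = f (x k) - f xbar := fun k => rfl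
  -- basic facts for k ≥ N₀
  have hdk : ∀ k, N₀ ≤ k → 0 < ‖d k‖ := by
    intro k hk
    rcases (hN₀ k hk).1 with ⟨hne, -, -⟩
    have : d k ≠ 0 := by
      intro h0
      exact hne (by rw [hiter k, h0, smul_zero, add_zero])
    simpa [norm_pos_iff] using this
  have hτpos : ∀ k, N₀ ≤ k → 0 < τ k := fun k hk => hτbar.trans_le (hN₀ k hk).2
  have hAk : ∀ k, N₀ ≤ k → β * τ k * ‖d k‖ ^ 2 ≤ e k - e (k+1) := by
    intro k hk
    have h := (hN₀ k hk).1.2.1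
    rw [he, he]; linarith
  have hdecr : ∀ k, N₀ ≤ k → e (k+1) < e k := by
    intro k hk
    have h1 := hAk k hk
    have h2 : 0 < β * τ k * ‖d k‖ ^ 2 :=
      mul_pos (mul_pos hβ (hτpos k hk)) (pow_pos (hdk k hk) 2)
    linarith
  have hmono : ∀ a, N₀ ≤ a → ∀ b, a ≤ b → e b ≤ e a := by
    intro a ha b hb
    induction b, hb using Nat.le_induction with
    | base => exact le_refl _
    | succ m hm ih => exact (hdecr m (ha.trans hm)).le.trans ih
  have hft : Tendsto (fun j => e (φ j)) atTop (𝓝 0) := by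
    have h1 : Tendsto (fun j => f (x (φ j))) atTop (𝓝 (f xbar)) :=
      (hf.continuous.tendsto xbar).comp hφt
    have := h1.sub_const (f xbar)
    simpa using this
  have hepos : ∀ k, N₀ ≤ k → 0 < e k := by
    intro k hk
    have h1 : (0:ℝ) ≤ e (k+1) := by
      apply le_of_tendsto hft
      filter_upwards [eventually_ge_atTop (k+1)] with j hj
      exact hmono (k+1) (by omega) (φ j) (hj.trans hφ.le_apply)
    linarith [hdecr k hk]
  -- constants
  set C1 : ℝ := α / (β * M * (1 - q)) with hC1_def
  have hC1 : 0 < C1 := by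
    apply div_pos hα
    positivity
  set κ : ℝ := β * τbar * M^2 / α^2 with hκ_def
  have hκ0 : 0 < κ := by positivity
  -- the key one-step estimate
  have key : ∀ k, N₀ ≤ k → x k ∈ Metric.ball xbar ε → e k < η → e k ≤ 1 →
      e (k+1) ≤ (1 - κ) * e k ∧
      ‖x (k+1) - x k‖ ≤ C1 * (e k ^ (1-q) - e (k+1) ^ (1-q)) := by
    intro k hk hxmem hkη hk1
    have hgrad := (hN₀ k hk).1.2.2
    have hτk : τbar ≤ τ k := (hN₀ k hk).2
    have hτkpos : 0 < τ k := hτpos k hk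
    have hdkpos : 0 < ‖d k‖ := hdk k hk
    have hek : 0 < e k := hepos k hk
    have hek1 : 0 < e (k+1) := hepos (k+1) (by omega)
    have hA := hAk k hk
    have hKLk : M * e k ^ q ≤ α * ‖d k‖ := by
      refine le_trans ?_ hgrad
      have h1 : f xbar < f (x k) := by rw [he] at hek; linarith
      have h2 : f (x k) < f xbar + η := by rw [he] at hkη; linarith
      have := hKLU (x k) (hball hxmem) h1 h2
      rwa [← he] at this
    have heq : e k ≤ e k ^ q * e k ^ q := by
      have h1 : e k = e k ^ (1:ℝ) := (Real.rpow_one _).symm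
      have h2 : e k ^ (1:ℝ) ≤ e k ^ (q + q) :=
        Real.rpow_le_rpow_of_exponent_ge hek hk1 (by linarith)
      rw [Real.rpow_add hek, Real.rpow_one] at h2
      exact h2
    have heq_pos : 0 < e k ^ q := Real.rpow_pos_of_pos hek q
    constructor
    · -- geometric decay
      have h2 : (M * e k ^ q) * (M * e k ^ q) ≤ (α * ‖d k‖) * (α * ‖d k‖) :=
        mul_le_mul hKLk hKLk (by positivity) (by positivity)
      have h4 : M^2 * e k ≤ α^2 * ‖d k‖^2 := by
        calc M^2 * e k ≤ M^2 * (e k ^ q * e k ^ q) :=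
              mul_le_mul_of_nonneg_left heq (by positivity)
          _ = (M * e k ^ q) * (M * e k ^ q) := by ring
          _ ≤ (α * ‖d k‖) * (α * ‖d k‖) := h2
          _ = α^2 * ‖d k‖^2 := by ring
      have h3 : β * τbar * (M^2 * e k) ≤ α^2 * (β * τ k * ‖d k‖^2) := by
        calc β * τbar * (M^2 * e k) ≤ β * τbar * (α^2 * ‖d k‖^2) :=
              mul_le_mul_of_nonneg_left h4 (by positivity)
          _ = α^2 * (β * τbar * ‖d k‖^2) := by ring
          _ ≤ α^2 * (β * τ k * ‖d k‖^2) := by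
              apply mul_le_mul_of_nonneg_left _ (by positivity)
              have := mul_le_mul_of_nonneg_right hτk (by positivity : (0:ℝ) ≤ ‖d k‖^2)
              nlinarith [this]
      have h5 : κ * e k ≤ e k - e (k+1) := by
        rw [hκ_def, div_mul_eq_mul_div, div_le_iff₀ (by positivity : (0:ℝ) < α^2)]
        have h6 : α^2 * (β * τ k * ‖d k‖^2) ≤ α^2 * (e k - e (k+1)) :=
          mul_le_mul_of_nonneg_left hA (by positivity)
        calc β * τbar * M^2 * e k = β * τbar * (M^2 * e k) := by ring
          _ ≤ α^2 * (e k - e (k+1)) := h3.trans h6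
          _ = (e k - e (k+1)) * α^2 := by ring
      linarith
    · -- step length bound
      have hstep_eq : ‖x (k+1) - x k‖ = τ k * ‖d k‖ := by
        rw [hiter k, add_sub_cancel_left, norm_smul, Real.norm_eq_abs,
          abs_of_nonneg (hτnonneg k)]
      have hB : β * (τ k * ‖d k‖) * (M * e k ^ q) ≤ α * (e k - e (k+1)) := by
        calc β * (τ k * ‖d k‖) * (M * e k ^ q)
            ≤ β * (τ k * ‖d k‖) * (α * ‖d k‖) :=
              mul_le_mul_of_nonneg_left hKLk (by positivity)
          _ = α * (β * τ k * ‖d k‖^2) := by ring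
          _ ≤ α * (e k - e (k+1)) := mul_le_mul_of_nonneg_left hA hα.le
      have hconc := aux_concave hq0 hq1 hek1 (hdecr k hk).le
      have h5 : (β * M * (1-q) * (τ k * ‖d k‖)) * e k ^ q ≤
          (α * (e k ^ (1-q) - e (k+1) ^ (1-q))) * e k ^ q := by
        calc (β * M * (1-q) * (τ k * ‖d k‖)) * e k ^ q
            = (1-q) * (β * (τ k * ‖d k‖) * (M * e k ^ q)) := by ring
          _ ≤ (1-q) * (α * (e k - e (k+1))) :=
              mul_le_mul_of_nonneg_left hB h1q.le
          _ = α * ((1-q) * (e k - e (k+1))) := by ring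
          _ ≤ α * (e k ^ q * (e k ^ (1-q) - e (k+1) ^ (1-q))) :=
              mul_le_mul_of_nonneg_left hconc hα.le
          _ = (α * (e k ^ (1-q) - e (k+1) ^ (1-q))) * e k ^ q := by ring
      have h6 := le_of_mul_le_mul_right h5 heq_pos
      rw [hstep_eq, hC1_def, div_mul_eq_mul_div, le_div_iff₀ (by positivity)]
      linarith
  -- choose the starting index N
  set δ0 : ℝ := (ε / (2 * (C1 + 1))) ^ ((1 - q)⁻¹) with hδ0_def
  have hδ0 : 0 < δ0 := Real.rpow_pos_of_pos (by positivity) _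
  set δ : ℝ := min 1 (min η δ0) with hδ_def
  have hδpos : 0 < δ := lt_min one_pos (lt_min hη hδ0)
  have hev1 : ∀ᶠ j in atTop, dist (x (φ j)) xbar < ε / 2 := by
    have := Metric.tendsto_nhds.mp hφt (ε/2) (by positivity)
    exact this
  have hev2 : ∀ᶠ j in atTop, e (φ j) < δ := hft.eventually (gt_mem_nhds hδpos)
  obtain ⟨j, hj1, hj2, hj3⟩ := ((eventually_ge_atTop N₀).and (hev1.and hev2)).exists
  set N := φ j with hN_def
  have hNge : N₀ ≤ N := hj1.trans hφ.le_apply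
  have heN1 : e N ≤ 1 := (hj3.le.trans (min_le_left _ _))
  have heNη : e N < η := lt_of_lt_of_le hj3 ((min_le_right _ _).trans (min_le_left _ _))
  have heNδ0 : e N < δ0 := lt_of_lt_of_le hj3 ((min_le_right _ _).trans (min_le_right _ _))
  have heN0 : 0 < e N := hepos N hNge
  have hxN : ‖x N - xbar‖ < ε / 2 := by rw [← dist_eq_norm]; exact hj2
  have hδbound : C1 * e N ^ (1 - q) < ε / 2 := by
    have h1 : e N ^ (1-q) < δ0 ^ (1-q) := Real.rpow_lt_rpow heN0.le heNδ0 h1q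
    have h2 : δ0 ^ (1-q) = ε / (2 * (C1 + 1)) := by
      rw [hδ0_def, ← Real.rpow_mul (by positivity), inv_mul_cancel₀ (ne_of_gt h1q),
        Real.rpow_one]
    have h3 : C1 * e N ^ (1-q) < C1 * (ε / (2 * (C1 + 1))) := by
      rw [← h2]; exact mul_lt_mul_of_pos_left h1 hC1
    have h4 : C1 * (ε / (2 * (C1 + 1))) < (C1 + 1) * (ε / (2 * (C1 + 1))) := by
      apply mul_lt_mul_of_pos_right (by linarith) (by positivity)
    have h5 : (C1 + 1) * (ε / (2 * (C1 + 1))) = ε / 2 := by field_simp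
    linarith
  have hNball : x N ∈ Metric.ball xbar ε := by
    rw [Metric.mem_ball, dist_eq_norm]; linarith
  -- κ < 1
  have hκ1 : κ < 1 := by
    have h1 := (key N hNge hNball heNη heN1).1
    have h2 : 0 < e (N+1) := hepos (N+1) (by omega)
    nlinarith [heN0]
  -- the main invariant
  have main : ∀ m : ℕ, x (N+m) ∈ Metric.ball xbar ε ∧ e (N+m) ≤ (1-κ)^m * e N ∧
      ‖x (N+m) - x N‖ ≤ C1 * (e N ^ (1-q) - e (N+m) ^ (1-q)) := by
    intro m
    induction m with
    | zero =>
      refine ⟨hNball, by simp, ?_⟩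
      simp
    | succ m ih =>
      obtain ⟨ihball, ihe, ihnorm⟩ := ih
      have hkge : N₀ ≤ N + m := by omega
      have heme : e (N+m) ≤ e N := hmono N hNge (N+m) (by omega)
      obtain ⟨hdecay, hstep⟩ := key (N+m) hkge ihball (lt_of_le_of_lt heme heNη)
        (heme.trans heN1)
      have hnm : N + (m+1) = (N + m) + 1 := by omega
      have he' : e (N+(m+1)) ≤ (1-κ)^(m+1) * e N := by
        rw [hnm]
        calc e ((N+m)+1) ≤ (1-κ) * e (N+m) := hdecay
          _ ≤ (1-κ) * ((1-κ)^m * e N) :=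
              mul_le_mul_of_nonneg_left ihe (by linarith)
          _ = (1-κ)^(m+1) * e N := by ring
      have hnorm' : ‖x (N+(m+1)) - x N‖ ≤ C1 * (e N ^ (1-q) - e (N+(m+1)) ^ (1-q)) := by
        rw [hnm]
        calc ‖x ((N+m)+1) - x N‖
            = ‖(x ((N+m)+1) - x (N+m)) + (x (N+m) - x N)‖ := by rw [sub_add_sub_cancel]
          _ ≤ ‖x ((N+m)+1) - x (N+m)‖ + ‖x (N+m) - x N‖ := norm_add_le _ _
          _ ≤ C1 * (e (N+m) ^ (1-q) - e ((N+m)+1) ^ (1-q)) +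
              C1 * (e N ^ (1-q) - e (N+m) ^ (1-q)) := add_le_add hstep ihnorm
          _ = C1 * (e N ^ (1-q) - e ((N+m)+1) ^ (1-q)) := by ring
      refine ⟨?_, he', hnorm'⟩
      rw [Metric.mem_ball, dist_eq_norm]
      have h1 : 0 ≤ e (N+(m+1)) ^ (1-q) := Real.rpow_nonneg (by
        have := hepos (N+(m+1)) (by omega); linarith) _
      calc ‖x (N+(m+1)) - xbar‖
          = ‖(x (N+(m+1)) - x N) + (x N - xbar)‖ := by rw [sub_add_sub_cancel]
        _ ≤ ‖x (N+(m+1)) - x N‖ + ‖x N - xbar‖ := norm_add_le _ _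
        _ < C1 * (e N ^ (1-q) - e (N+(m+1)) ^ (1-q)) + ε/2 :=
            add_lt_add_of_le_of_lt hnorm' hxN
        _ ≤ C1 * e N ^ (1-q) + ε/2 := by
            have hp := mul_nonneg hC1.le h1
            have hr : C1 * (e N ^ (1-q) - e (N+(m+1)) ^ (1-q)) =
                C1 * e N ^ (1-q) - C1 * e (N+(m+1)) ^ (1-q) := by ring
            linarith
        _ < ε := by linarith
  -- telescoping from an arbitrary index k ≥ N
  have tele : ∀ k, N ≤ k → ∀ m, ‖x (k+m) - x k‖ ≤ C1 * (e k ^ (1-q) - e (k+m) ^ (1-q)) := by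
    intro k hk m
    induction m with
    | zero => simp
    | succ m ih =>
      have hco : N + (k + m - N) = k + m := by omega
      have hI := main (k + m - N)
      rw [hco] at hI
      obtain ⟨hIball, -, -⟩ := hI
      have heme : e (k+m) ≤ e N := hmono N hNge (k+m) (by omega)
      obtain ⟨-, hstep⟩ := key (k+m) (by omega) hIball (lt_of_le_of_lt heme heNη)
        (heme.trans heN1)
      have hnm : k + (m+1) = (k + m) + 1 := by omega
      rw [hnm]
      calc ‖x ((k+m)+1) - x k‖
          = ‖(x ((k+m)+1) - x (k+m)) + (x (k+m) - x k)‖ := by rw [sub_add_sub_cancel]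
        _ ≤ ‖x ((k+m)+1) - x (k+m)‖ + ‖x (k+m) - x k‖ := norm_add_le _ _
        _ ≤ C1 * (e (k+m) ^ (1-q) - e ((k+m)+1) ^ (1-q)) +
            C1 * (e k ^ (1-q) - e (k+m) ^ (1-q)) := add_le_add hstep ih
        _ = C1 * (e k ^ (1-q) - e ((k+m)+1) ^ (1-q)) := by ring
  -- distance to the limit point
  have hlim : ∀ k, N ≤ k → ‖x k - xbar‖ ≤ C1 * e k ^ (1-q) := by
    intro k hk
    have ht : Tendsto (fun j => ‖x k - x (φ j)‖) atTop (𝓝 ‖x k - xbar‖) :=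
      (tendsto_const_nhds.sub hφt).norm
    apply le_of_tendsto ht
    filter_upwards [eventually_ge_atTop k] with i hi
    have hφi : k ≤ φ i := hi.trans hφ.le_apply
    have h1 := tele k hk (φ i - k)
    rw [Nat.add_sub_cancel' hφi] at h1
    have h2 : 0 ≤ e (φ i) ^ (1-q) := Real.rpow_nonneg (by
      have := hepos (φ i) (by omega); linarith) _
    rw [norm_sub_rev]
    have hp := mul_nonneg hC1.le h2
    have hr : C1 * (e k ^ (1-q) - e (φ i) ^ (1-q)) =
        C1 * e k ^ (1-q) - C1 * e (φ i) ^ (1-q) := by ring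
    linarith
  -- conclusion
  have hκ1' : 0 < 1 - κ := by linarith
  set c : ℝ := (1-κ) ^ (1-q) with hc_def
  have hc0 : 0 < c := Real.rpow_pos_of_pos hκ1' _
  have hc1 : c < 1 := Real.rpow_lt_one hκ1'.le (by linarith) h1q
  refine ⟨C1 * e N ^ (1-q) / c ^ N, by positivity, c, ⟨hc0, hc1⟩, N, ?_⟩
  intro k hk
  have h1 := (main (k - N)).2.1
  have hco : N + (k - N) = k := by omega
  rw [hco] at h1
  have hek0 : 0 < e k := hepos k (by omega)
  have h2 : e k ^ (1-q) ≤ ((1-κ)^(k-N) * e N) ^ (1-q) :=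
    Real.rpow_le_rpow hek0.le h1 h1q.le
  have h3 : ((1-κ)^(k-N) * e N) ^ (1-q) = c ^ (k-N) * e N ^ (1-q) := by
    rw [Real.mul_rpow (by positivity) heN0.le, hc_def]
    congr 1
    rw [← Real.rpow_natCast (1-κ) (k-N), ← Real.rpow_mul hκ1'.le, mul_comm,
      Real.rpow_mul hκ1'.le, Real.rpow_natCast]
  have h4 : ‖x k - xbar‖ ≤ C1 * (c ^ (k-N) * e N ^ (1-q)) := by
    calc ‖x k - xbar‖ ≤ C1 * e k ^ (1-q) := hlim k hk
      _ ≤ C1 * (c ^ (k-N) * e N ^ (1-q)) := by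
          rw [← h3]; exact mul_le_mul_of_nonneg_left h2 hC1.le
  have h5 : C1 * e N ^ (1-q) / c ^ N * c ^ k = C1 * (c ^ (k-N) * e N ^ (1-q)) := by
    have : c ^ k = c ^ N * c ^ (k-N) := by rw [← pow_add]; congr 1; omega
    rw [this]
    field_simp
  rw [h5]
  exact h4
end

section
/- Let f : ℝⁿ → ℝ be a C¹-smooth function, let x ∈ ℝⁿ and δ > 0, and assume that ∇f is Lipschitz continuous on the closed ball B̄(x, δ) with constant L > 0. Then the forward finite difference approximation 𝒢(x, δ) := (1/δ) ∑_{i=1}^n (f(x + δe_i) − f(x)) e_i satisfies ‖𝒢(x, δ) − ∇f(x)‖ ≤ (L √n δ)/2. -/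
open Filter Topology

section aux

variable {n : ℕ}

local notation "E" => EuclideanSpace ℝ (Fin n)

lemma fderiv_eq_inner_gradient (f : E → ℝ) (hf : ContDiff ℝ 1 f) (y : E) (v : E) :
    fderiv ℝ f y v = inner ℝ (gradient f y) v := by
  have h := ((hf.differentiable one_ne_zero) y).hasGradientAt
  have h2 : fderiv ℝ f y = InnerProductSpace.toDual ℝ E (gradient f y) :=
    (h.hasFDerivAt.fderiv.symm).symm
  rw [h2, InnerProductSpace.toDual_apply_apply]

lemma coord_bound (f : E → ℝ) (hf : ContDiff ℝ 1 f)
    (x : E) (δ L : ℝ) (hδ : 0 < δ) (hL : 0 < L)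
    (hlip : ∀ y ∈ Metric.closedBall x δ, ∀ z ∈ Metric.closedBall x δ,
      ‖gradient f y - gradient f z‖ ≤ L * ‖y - z‖) (i : Fin n) :
    |f (x + δ • EuclideanSpace.single i (1 : ℝ)) - f x
      - δ * fderiv ℝ f x (EuclideanSpace.single i (1 : ℝ))| ≤ L * δ ^ 2 / 2 := by
  set e : E := EuclideanSpace.single i (1 : ℝ) with he
  have hne : ‖e‖ = 1 := by simp [he]
  set c : ℝ → E := fun t => x + t • e with hc
  have hcd : ∀ t : ℝ, HasDerivAt c e t := by
    intro t
    simpa [hc] using ((hasDerivAt_id t).smul_const e).const_add x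
  have hdiff : Differentiable ℝ f := hf.differentiable one_ne_zero
  have hφ : ∀ t : ℝ, HasDerivAt (fun t => f (c t)) (fderiv ℝ f (c t) e) t := by
    intro t
    exact (hdiff (c t)).hasFDerivAt.comp_hasDerivAt t (hcd t)
  have hcont : Continuous fun t : ℝ => fderiv ℝ f (c t) e := by
    have h1 : Continuous fun y : E => fderiv ℝ f y := hf.continuous_fderiv one_ne_zero
    have hcc : Continuous c := by
      continuity
    exact ((h1.comp hcc).clm_apply continuous_const)
  have hint : IntervalIntegrable (fun t : ℝ => fderiv ℝ f (c t) e) MeasureTheory.volume 0 δ :=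
    hcont.intervalIntegrable 0 δ
  have heq : f (c δ) - f (c 0) = ∫ t in (0:ℝ)..δ, fderiv ℝ f (c t) e := by
    rw [intervalIntegral.integral_eq_sub_of_hasDerivAt (fun t _ => hφ t) hint]
  have hc0 : c 0 = x := by simp [hc]
  have hmem : ∀ t ∈ Set.Icc (0:ℝ) δ, c t ∈ Metric.closedBall x δ := by
    intro t ht
    simp only [Metric.mem_closedBall, hc, dist_eq_norm]
    have : x + t • e - x = t • e := by abel
    rw [this, norm_smul, hne, mul_one, Real.norm_eq_abs, abs_of_nonneg ht.1]
    exact ht.2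
  have hbound : ∀ t ∈ Set.Icc (0:ℝ) δ,
      ‖fderiv ℝ f (c t) e - fderiv ℝ f x e‖ ≤ L * t := by
    intro t ht
    have h1 : fderiv ℝ f (c t) e = inner ℝ (gradient f (c t)) e :=
      fderiv_eq_inner_gradient f hf _ _
    have h2 : fderiv ℝ f x e = inner ℝ (gradient f x) e :=
      fderiv_eq_inner_gradient f hf _ _
    rw [h1, h2, ← inner_sub_left]
    calc ‖(inner ℝ (gradient f (c t) - gradient f x) e : ℝ)‖
        ≤ ‖gradient f (c t) - gradient f x‖ * ‖e‖ := norm_inner_le_norm _ _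
      _ ≤ (L * ‖c t - x‖) * 1 := by
          rw [hne]
          exact mul_le_mul_of_nonneg_right
            (hlip _ (hmem t ht) _ (by simp [Metric.mem_closedBall, le_of_lt hδ])) zero_le_one
      _ = L * t := by
          have : c t - x = t • e := by simp only [hc]; abel
          rw [this, norm_smul, hne, mul_one, Real.norm_eq_abs, abs_of_nonneg ht.1, mul_one]
  have key : f (c δ) - f (c 0) - δ * fderiv ℝ f x e
      = ∫ t in (0:ℝ)..δ, (fderiv ℝ f (c t) e - fderiv ℝ f x e) := by
    rw [intervalIntegral.integral_sub hint (intervalIntegrable_const),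
      intervalIntegral.integral_const, ← heq]
    simp [smul_eq_mul]
  have hres : ‖∫ t in (0:ℝ)..δ, (fderiv ℝ f (c t) e - fderiv ℝ f x e)‖
      ≤ L * δ ^ 2 / 2 := by
    have hLδ : (L * δ ^ 2 / 2) = ∫ t in (0:ℝ)..δ, L * t := by
      rw [intervalIntegral.integral_const_mul, integral_id]
      ring
    have hb := intervalIntegral.norm_integral_le_of_norm_le (μ := MeasureTheory.volume)
      (a := (0:ℝ)) (b := δ) (f := fun t => fderiv ℝ f (c t) e - fderiv ℝ f x e)
      (g := fun t => L * t) hδ.le ?_ ((continuous_const.mul continuous_id).intervalIntegrable 0 δ)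
    · refine hb.trans ?_
      rw [← hLδ]
    · filter_upwards with t ht
      exact hbound t ⟨le_of_lt ht.1, ht.2⟩
  rw [← Real.norm_eq_abs]
  calc ‖f (x + δ • e) - f x - δ * fderiv ℝ f x e‖
      = ‖f (c δ) - f (c 0) - δ * fderiv ℝ f x e‖ := by rw [hc0]
    _ ≤ L * δ ^ 2 / 2 := by rw [key]; exact hres

end aux

/-- Error bound for the forward finite difference approximation of the
gradient when ∇f is Lipschitz continuous on the closed ball B̄(x, δ). -/
theorem stmt_6 {n : ℕ} (f : EuclideanSpace ℝ (Fin n) → ℝ) (hf : ContDiff ℝ 1 f)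
    (x : EuclideanSpace ℝ (Fin n)) (δ L : ℝ) (hδ : 0 < δ) (hL : 0 < L)
    (hlip : ∀ y ∈ Metric.closedBall x δ, ∀ z ∈ Metric.closedBall x δ,
      ‖gradient f y - gradient f z‖ ≤ L * ‖y - z‖) :
    ‖(δ⁻¹ • ∑ i : Fin n, (f (x + δ • EuclideanSpace.single i (1 : ℝ)) - f x) •
        EuclideanSpace.single i (1 : ℝ)) - gradient f x‖ ≤ L * Real.sqrt n * δ / 2 := by
  set v : EuclideanSpace ℝ (Fin n) :=
    (δ⁻¹ • ∑ i : Fin n, (f (x + δ • EuclideanSpace.single i (1 : ℝ)) - f x) •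
        EuclideanSpace.single i (1 : ℝ)) - gradient f x with hv
  have hgrad : ∀ j : Fin n, gradient f x j
      = fderiv ℝ f x (EuclideanSpace.single j (1 : ℝ)) := by
    intro j
    rw [fderiv_eq_inner_gradient f hf, EuclideanSpace.inner_single_right]
    simp [EuclideanSpace.inner_single_right]
  have hvj : ∀ j : Fin n,
      v j = δ⁻¹ * (f (x + δ • EuclideanSpace.single j (1 : ℝ)) - f x)
        - fderiv ℝ f x (EuclideanSpace.single j (1 : ℝ)) := by
    intro j
    rw [hv, ← hgrad j]
    simp only [PiLp.sub_apply, PiLp.smul_apply, smul_eq_mul]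
    congr 1
    rw [show ((∑ i : Fin n, (f (x + δ • EuclideanSpace.single i (1 : ℝ)) - f x) •
        EuclideanSpace.single i (1 : ℝ)) j)
      = ∑ i : Fin n, ((f (x + δ • EuclideanSpace.single i (1 : ℝ)) - f x) •
        EuclideanSpace.single i (1 : ℝ)) j from by rw [WithLp.ofLp_sum]; exact Finset.sum_apply j _ _]
    simp [EuclideanSpace.single_apply, Finset.sum_ite_eq', mul_comm]
  have hvb : ∀ j : Fin n, |v j| ≤ L * δ / 2 := by
    intro j
    rw [hvj j]
    have h := coord_bound f hf x δ L hδ hL hlip j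
    have hrw : δ⁻¹ * (f (x + δ • EuclideanSpace.single j (1 : ℝ)) - f x)
        - fderiv ℝ f x (EuclideanSpace.single j (1 : ℝ))
        = δ⁻¹ * (f (x + δ • EuclideanSpace.single j (1 : ℝ)) - f x
          - δ * fderiv ℝ f x (EuclideanSpace.single j (1 : ℝ))) := by
      field_simp
    rw [hrw, abs_mul, abs_of_pos (inv_pos.mpr hδ)]
    calc δ⁻¹ * |f (x + δ • EuclideanSpace.single j (1 : ℝ)) - f x
          - δ * fderiv ℝ f x (EuclideanSpace.single j (1 : ℝ))|
        ≤ δ⁻¹ * (L * δ ^ 2 / 2) := by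
          exact mul_le_mul_of_nonneg_left h (le_of_lt (inv_pos.mpr hδ))
      _ = L * δ / 2 := by field_simp
  rw [EuclideanSpace.norm_eq]
  have hsum : ∑ j : Fin n, ‖v j‖ ^ 2 ≤ n * (L * δ / 2) ^ 2 := by
    calc ∑ j : Fin n, ‖v j‖ ^ 2 ≤ ∑ _j : Fin n, (L * δ / 2) ^ 2 := by
          apply Finset.sum_le_sum
          intro j _
          have := hvb j
          rw [Real.norm_eq_abs]
          exact pow_le_pow_left₀ (abs_nonneg _) this 2
      _ = n * (L * δ / 2) ^ 2 := by simp [Finset.sum_const, nsmul_eq_mul]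
  calc Real.sqrt (∑ j : Fin n, ‖v j‖ ^ 2)
      ≤ Real.sqrt (n * (L * δ / 2) ^ 2) := Real.sqrt_le_sqrt hsum
    _ = Real.sqrt n * (L * δ / 2) := by
        rw [Real.sqrt_mul (Nat.cast_nonneg n), Real.sqrt_sq (by positivity)]
    _ = L * Real.sqrt n * δ / 2 := by ring
end

section
/- Let f : ℝⁿ → ℝ be a C¹-smooth function, let x ∈ ℝⁿ and δ > 0, and assume that ∇f is Lipschitz continuous on the closed ball B̄(x, δ) with constant L > 0. Then the central finite difference approximation 𝒢(x, δ) := (1/(2δ)) ∑_{i=1}^n (f(x + δe_i) − f(x − δe_i)) e_i satisfies ‖𝒢(x, δ) − ∇f(x)‖ ≤ (L √n δ)/2. -/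
open Filter Topology intervalIntegral RealInnerProductSpace

lemma aux_abs_int (δ : ℝ) (hδ : 0 ≤ δ) : (∫ t in (-δ)..δ, |t|) = δ ^ 2 := by
  have h1 : (∫ t in (0:ℝ)..δ, |t|) = δ ^ 2 / 2 := by
    rw [intervalIntegral.integral_congr (g := fun t => t)]
    · rw [integral_id]; ring
    · intro t ht
      rw [Set.uIcc_of_le hδ] at ht
      exact abs_of_nonneg ht.1
  have h2 : (∫ t in (-δ)..(0:ℝ), |t|) = δ ^ 2 / 2 := by
    have := intervalIntegral.integral_comp_neg (a := (0:ℝ)) (b := δ) (fun t => |t|)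
    simp only [abs_neg, neg_zero] at this
    rw [← this, h1]
  rw [← intervalIntegral.integral_add_adjacent_intervals (a := -δ) (b := 0) (c := δ)
      (continuous_abs.intervalIntegrable _ _) (continuous_abs.intervalIntegrable _ _),
    h1, h2]
  ring

lemma aux_1d (g g' : ℝ → ℝ) (L δ : ℝ) (hδ : 0 < δ)
    (hderiv : ∀ t, HasDerivAt g (g' t) t) (hcont : Continuous g')
    (hbound : ∀ t ∈ Set.Icc (-δ) δ, |g' t - g' 0| ≤ L * |t|) :
    |g δ - g (-δ) - 2 * δ * g' 0| ≤ L * δ ^ 2 := by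
  have hle : (-δ) ≤ δ := by linarith
  have hint : (g δ - g (-δ)) = ∫ t in (-δ)..δ, g' t :=
    (intervalIntegral.integral_eq_sub_of_hasDerivAt (fun t _ => hderiv t)
      (hcont.intervalIntegrable _ _)).symm
  have hconst : (2 * δ * g' 0) = ∫ t in (-δ)..δ, g' 0 := by
    rw [intervalIntegral.integral_const, smul_eq_mul]; ring
  rw [hint, hconst, ← intervalIntegral.integral_sub (hcont.intervalIntegrable _ _)
    (intervalIntegrable_const)]
  have h1 : |∫ t in (-δ)..δ, (g' t - g' 0)| ≤ ∫ t in (-δ)..δ, |g' t - g' 0| := by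
    simpa using intervalIntegral.norm_integral_le_integral_norm (f := fun t => g' t - g' 0) hle
  refine h1.trans ?_
  have h2 : (∫ t in (-δ)..δ, |g' t - g' 0|) ≤ ∫ t in (-δ)..δ, L * |t| := by
    apply intervalIntegral.integral_mono_on hle
      ((hcont.sub continuous_const).abs.intervalIntegrable _ _)
      ((continuous_const.mul continuous_abs).intervalIntegrable _ _)
    exact hbound
  refine h2.trans ?_
  rw [intervalIntegral.integral_const_mul, aux_abs_int δ hδ.le]

/-- Error bound for the central finite difference approximation of the
gradient when ∇f is Lipschitz continuous on the closed ball B̄(x, δ). -/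
theorem stmt_7 {n : ℕ} (f : EuclideanSpace ℝ (Fin n) → ℝ) (hf : ContDiff ℝ 1 f)
    (x : EuclideanSpace ℝ (Fin n)) (δ L : ℝ) (hδ : 0 < δ) (hL : 0 < L)
    (hlip : ∀ y ∈ Metric.closedBall x δ, ∀ z ∈ Metric.closedBall x δ,
      ‖gradient f y - gradient f z‖ ≤ L * ‖y - z‖) :
    ‖((2 * δ)⁻¹ • ∑ i : Fin n,
        (f (x + δ • EuclideanSpace.single i (1 : ℝ)) -
          f (x - δ • EuclideanSpace.single i (1 : ℝ))) •
        EuclideanSpace.single i (1 : ℝ)) - gradient f x‖ ≤ L * Real.sqrt n * δ / 2 := by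
  set e : Fin n → EuclideanSpace ℝ (Fin n) := fun i => EuclideanSpace.single i (1 : ℝ) with he
  have hdiff : Differentiable ℝ f := hf.differentiable one_ne_zero
  have hgrad_inner : ∀ (y : EuclideanSpace ℝ (Fin n)) (v : EuclideanSpace ℝ (Fin n)),
      (inner ℝ (gradient f y) v : ℝ) = fderiv ℝ f y v := fun y v =>
    InnerProductSpace.toDual_symm_apply
  have hnorme : ∀ i, ‖e i‖ = 1 := fun i => by
    simp [he, EuclideanSpace.norm_single]
  -- componentwise bound
  have key : ∀ i : Fin n,
      |f (x + δ • e i) - f (x - δ • e i) - 2 * δ * (gradient f x i)| ≤ L * δ ^ 2 := by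
    intro i
    set g : ℝ → ℝ := fun t => f (x + t • e i) with hg
    set g' : ℝ → ℝ := fun t => fderiv ℝ f (x + t • e i) (e i) with hg'
    have hline : ∀ t : ℝ, HasDerivAt (fun t : ℝ => x + t • e i) (e i) t := by
      intro t
      simpa using ((hasDerivAt_id t).smul_const (e i)).const_add x
    have hderiv : ∀ t, HasDerivAt g (g' t) t := fun t =>
      (hdiff (x + t • e i)).hasFDerivAt.comp_hasDerivAt t (hline t)
    have hlinec : Continuous fun t : ℝ => x + t • e i :=
      continuous_const.add (continuous_id.smul continuous_const)
    have hcont : Continuous g' :=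
      ((hf.continuous_fderiv one_ne_zero).comp hlinec).clm_apply continuous_const
    have hbound : ∀ t ∈ Set.Icc (-δ) δ, |g' t - g' 0| ≤ L * |t| := by
      intro t ht
      have hmem : ∀ s : ℝ, s ∈ Set.Icc (-δ) δ → x + s • e i ∈ Metric.closedBall x δ := by
        intro s hs
        rw [Metric.mem_closedBall, dist_eq_norm]
        simp only [add_sub_cancel_left, norm_smul, hnorme i, mul_one, Real.norm_eq_abs]
        exact abs_le.2 ⟨hs.1, hs.2⟩
      have h0 : (x + (0:ℝ) • e i) = x := by simp
      have heq : g' t - g' 0 = (inner ℝ (gradient f (x + t • e i) - gradient f (x + (0:ℝ) • e i)) (e i) : ℝ) := by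
        rw [inner_sub_left, hgrad_inner, hgrad_inner]
      calc |g' t - g' 0| = |(inner ℝ (gradient f (x + t • e i) - gradient f (x + (0:ℝ) • e i)) (e i) : ℝ)| := by
            rw [heq]
        _ ≤ ‖gradient f (x + t • e i) - gradient f (x + (0:ℝ) • e i)‖ * ‖e i‖ :=
            abs_real_inner_le_norm _ _
        _ = ‖gradient f (x + t • e i) - gradient f (x + (0:ℝ) • e i)‖ := by
            rw [hnorme i, mul_one]
        _ ≤ L * ‖(x + t • e i) - (x + (0:ℝ) • e i)‖ :=
            hlip _ (hmem t ht) _ (hmem 0 ⟨by linarith, hδ.le⟩)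
        _ = L * |t| := by
            simp [norm_smul, hnorme i, Real.norm_eq_abs]
    have := aux_1d g g' L δ hδ hderiv hcont hbound
    have hgδ : g δ = f (x + δ • e i) := rfl
    have hgmδ : g (-δ) = f (x - δ • e i) := by
      simp only [hg, neg_smul, sub_eq_add_neg]
    have hg0 : g' 0 = gradient f x i := by
      have : g' 0 = (inner ℝ (gradient f (x + (0:ℝ) • e i)) (e i) : ℝ) := (hgrad_inner _ _).symm
      rw [this]
      simp only [zero_smul, add_zero, he]
      rw [EuclideanSpace.inner_single_right]; simp
    rw [hgδ, hgmδ, hg0] at this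
    exact this
  -- assemble
  set v : EuclideanSpace ℝ (Fin n) := ((2 * δ)⁻¹ • ∑ i : Fin n,
      (f (x + δ • e i) - f (x - δ • e i)) • e i) - gradient f x with hv
  have hvi : ∀ i : Fin n, |v i| ≤ L * δ / 2 := by
    intro i
    have hvix : v i = (2 * δ)⁻¹ * (f (x + δ • e i) - f (x - δ • e i)) - gradient f x i := by
      have hsa : (∑ j : Fin n, (f (x + δ • e j) - f (x - δ • e j)) • e j) i
          = ∑ j : Fin n, ((f (x + δ • e j) - f (x - δ • e j)) • e j) i :=
        by rw [WithLp.ofLp_sum, Finset.sum_apply]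
      simp [hv, PiLp.sub_apply, PiLp.smul_apply, hsa, he,
        EuclideanSpace.single_apply, smul_eq_mul, Pi.single_apply]
    have h2δ : (0:ℝ) < 2 * δ := by linarith
    have : v i = (2 * δ)⁻¹ * (f (x + δ • e i) - f (x - δ • e i) - 2 * δ * gradient f x i) := by
      rw [hvix]; field_simp
    rw [this, abs_mul, abs_of_nonneg (inv_nonneg.2 h2δ.le)]
    calc (2 * δ)⁻¹ * |f (x + δ • e i) - f (x - δ • e i) - 2 * δ * gradient f x i|
        ≤ (2 * δ)⁻¹ * (L * δ ^ 2) := by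
          exact mul_le_mul_of_nonneg_left (key i) (inv_nonneg.2 h2δ.le)
      _ = L * δ / 2 := by field_simp
  have hnorm : ‖v‖ ≤ Real.sqrt n * (L * δ / 2) := by
    rw [EuclideanSpace.norm_eq]
    have hsum : (∑ i : Fin n, ‖v i‖ ^ 2) ≤ n * (L * δ / 2) ^ 2 := by
      calc (∑ i : Fin n, ‖v i‖ ^ 2) ≤ ∑ _i : Fin n, (L * δ / 2) ^ 2 := by
            apply Finset.sum_le_sum
            intro i _
            have := hvi i
            have h1 : ‖v i‖ = |v i| := rfl
            rw [h1]
            exact pow_le_pow_left₀ (abs_nonneg _) this 2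
        _ = n * (L * δ / 2) ^ 2 := by simp [mul_comm]
    calc Real.sqrt (∑ i : Fin n, ‖v i‖ ^ 2) ≤ Real.sqrt (n * (L * δ / 2) ^ 2) :=
          Real.sqrt_le_sqrt hsum
      _ = Real.sqrt n * (L * δ / 2) := by
          rw [Real.sqrt_mul (Nat.cast_nonneg n), Real.sqrt_sq (by positivity)]
  calc ‖v‖ ≤ Real.sqrt n * (L * δ / 2) := hnorm
    _ = L * Real.sqrt n * δ / 2 := by ring
end

section
/- Let f : ℝⁿ → ℝ be a C¹-smooth function whose gradient ∇f is globally Lipschitz continuous with some constant L > 0, let 𝒢 be a global approximation of ∇f, and let {x^k}, {g^k}, {δ_k}, {C_k} be the sequences generated by Algorithm DFC with parameters θ ∈ (0,1), μ > 2, r > 1, κ > 0, initial point x¹ ∈ ℝⁿ, initial radius δ₁ > 0, and initial constant C₁ > 0. If ∇f(x^k) ≠ 0 for all k ∈ ℕ, then there exists N ∈ ℕ such that C_{k+1} = C_k for all k ≥ N. -/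
open Filter Topology

/-- Descent lemma: quadratic upper bound for a C¹ function with Lipschitz gradient. -/
lemma descent_lemma {E : Type*} [NormedAddCommGroup E] [InnerProductSpace ℝ E] [CompleteSpace E]
    (f : E → ℝ) (hf : ContDiff ℝ 1 f) (L : ℝ) (hL : 0 ≤ L)
    (hlip : ∀ y z : E, ‖gradient f y - gradient f z‖ ≤ L * ‖y - z‖) (x v : E) :
    f (x + v) ≤ f x + (inner ℝ (gradient f x) v : ℝ) + L / 2 * ‖v‖ ^ 2 := by
  have hdiff : Differentiable ℝ f := hf.differentiable one_ne_zero
  set c : ℝ := (inner ℝ (gradient f x) v : ℝ) with hc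
  have hline : ∀ t : ℝ, HasDerivAt (fun s : ℝ => f (x + s • v))
      ((inner ℝ (gradient f (x + t • v)) v : ℝ)) t := by
    intro t
    have h1 : HasDerivAt (fun s : ℝ => x + s • v) v t := by
      simpa using ((hasDerivAt_id t).smul_const v).const_add x
    have h2 := ((hdiff (x + t • v)).hasGradientAt.hasFDerivAt).comp_hasDerivAt t h1
    exact h2.congr_deriv (by simp [InnerProductSpace.toDual_apply_apply])
  set φ : ℝ → ℝ := fun t => f (x + t • v) - t * c - L * ‖v‖ ^ 2 / 2 * t ^ 2 with hφ
  have hφ' : ∀ t : ℝ, HasDerivAt φ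
      ((inner ℝ (gradient f (x + t • v)) v : ℝ) - c - L * ‖v‖ ^ 2 * t) t := by
    intro t
    have h3 : HasDerivAt (fun s : ℝ => s * c) c t := by
      simpa using (hasDerivAt_id t).mul_const c
    have h4 : HasDerivAt (fun s : ℝ => L * ‖v‖ ^ 2 / 2 * s ^ 2)
        (L * ‖v‖ ^ 2 / 2 * (2 * t)) t := by
      have := (hasDerivAt_pow 2 t).const_mul (L * ‖v‖ ^ 2 / 2)
      simpa using this
    have := ((hline t).sub h3).sub h4
    exact this.congr_deriv (by ring)
  have hanti : AntitoneOn φ (Set.Icc 0 1) := by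
    apply antitoneOn_of_hasDerivWithinAt_nonpos (convex_Icc 0 1)
      (fun t _ => ((hφ' t).continuousAt).continuousWithinAt)
      (fun t _ => ((hφ' t).hasDerivWithinAt))
    intro t ht
    rw [interior_Icc] at ht
    have hbound : (inner ℝ (gradient f (x + t • v)) v : ℝ) - c ≤ L * ‖v‖ ^ 2 * t := by
      have h5 : (inner ℝ (gradient f (x + t • v)) v : ℝ) - c
          = (inner ℝ (gradient f (x + t • v) - gradient f x) v : ℝ) := by
        rw [inner_sub_left]
      rw [h5]
      have h6 := real_inner_le_norm (gradient f (x + t • v) - gradient f x) v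
      have h7 := hlip (x + t • v) x
      have h8 : x + t • v - x = t • v := by abel
      have h10 : |t| = t := abs_of_pos ht.1
      rw [h8, norm_smul, Real.norm_eq_abs, h10] at h7
      have h9 : ‖gradient f (x + t • v) - gradient f x‖ * ‖v‖ ≤ L * (t * ‖v‖) * ‖v‖ :=
        mul_le_mul_of_nonneg_right h7 (norm_nonneg v)
      have h12 : L * (t * ‖v‖) * ‖v‖ = L * ‖v‖ ^ 2 * t := by ring
      linarith
    linarith
  have h01 : (0:ℝ) ∈ Set.Icc (0:ℝ) 1 := by norm_num
  have h11 : (1:ℝ) ∈ Set.Icc (0:ℝ) 1 := by norm_num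
  have := hanti h01 h11 zero_le_one
  simp only [hφ, zero_smul, add_zero, one_smul, zero_mul, zero_pow, one_pow, mul_zero,
    mul_one, sub_zero, one_mul] at this
  linarith

set_option maxHeartbeats 1000000 in
/-- For Algorithm DFC applied to a function with globally Lipschitz
gradient and a global gradient approximation 𝒢, the sequence {C_k} is eventually
constant: there is N with C_{k+1} = C_k for all k ≥ N. -/
theorem stmt_10 {n : ℕ} (f : EuclideanSpace ℝ (Fin n) → ℝ) (hf : ContDiff ℝ 1 f)
    (L : ℝ) (hL : 0 < L)
    (hlip : ∀ y z : EuclideanSpace ℝ (Fin n),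
      ‖gradient f y - gradient f z‖ ≤ L * ‖y - z‖)
    (G : EuclideanSpace ℝ (Fin n) → ℝ → EuclideanSpace ℝ (Fin n))
    (hG : ∃ C > (0 : ℝ), ∀ y : EuclideanSpace ℝ (Fin n), ∀ δ : ℝ, 0 < δ →
      ‖G y δ - gradient f y‖ ≤ C * δ)
    (θ μ r κ : ℝ) (hθ : θ ∈ Set.Ioo (0 : ℝ) 1) (hμ : 2 < μ) (hr : 1 < r) (hκ : 0 < κ)
    (x g : ℕ → EuclideanSpace ℝ (Fin n)) (δseq Cs : ℕ → ℝ)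
    (hδpos : ∀ k, 0 < δseq k) (hCpos : ∀ k, 0 < Cs k)
    (hstep1 : ∀ k, ∃ i : ℕ, δseq (k + 1) = θ ^ i * δseq k ∧
      g k = G (x k) (δseq (k + 1)) ∧ μ * Cs k * δseq (k + 1) < ‖g k‖)
    (hstep2 : ∀ k,
      (f (x k - (κ / Cs k) • g k) ≤
          f (x k) - (κ * (μ - 2) / (2 * Cs k * μ)) * ‖g k‖ ^ 2 ∧
        x (k + 1) = x k - (κ / Cs k) • g k ∧ Cs (k + 1) = Cs k) ∨
      (¬ (f (x k - (κ / Cs k) • g k) ≤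
          f (x k) - (κ * (μ - 2) / (2 * Cs k * μ)) * ‖g k‖ ^ 2) ∧
        x (k + 1) = x k ∧ Cs (k + 1) = r * Cs k))
    (hgrad : ∀ k, gradient f (x k) ≠ 0) :
    ∃ N : ℕ, ∀ k ≥ N, Cs (k + 1) = Cs k := by
  obtain ⟨Ca, hCa, hGb⟩ := hG
  set T : ℝ := 2 * Ca + L * κ with hT
  have hTpos : 0 < T := by positivity
  -- once Cs k ≥ T, the sufficient decrease condition holds
  have succ : ∀ k, T ≤ Cs k → Cs (k + 1) = Cs k := by
    intro k hk
    rcases hstep2 k with ⟨_, _, h⟩ | ⟨hfail, _, _⟩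
    · exact h
    exfalso; apply hfail
    obtain ⟨i, _, hgk, hglb⟩ := hstep1 k
    set C := Cs k with hCdef
    set d := δseq (k + 1) with hddef
    set a := ‖g k‖ with hadef
    have hCk : 0 < C := hCpos k
    have hd : 0 < d := hδpos (k + 1)
    have ha : 0 ≤ a := norm_nonneg _
    -- gradient approximation bound
    have happrox : ‖gradient f (x k) - g k‖ ≤ Ca * d := by
      rw [norm_sub_rev, hgk]
      exact hGb (x k) d hd
    -- inner product lower bound
    have hI : a ^ 2 - Ca * d * a ≤ (inner ℝ (gradient f (x k)) (g k) : ℝ) := by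
      have e1 : (inner ℝ (gradient f (x k)) (g k) : ℝ)
          = (inner ℝ (g k) (g k) : ℝ) + (inner ℝ (gradient f (x k) - g k) (g k) : ℝ) := by
        rw [inner_sub_left]; ring
      have e2 : (inner ℝ (g k) (g k) : ℝ) = a ^ 2 := real_inner_self_eq_norm_sq (g k)
      have e3 : -(‖gradient f (x k) - g k‖ * a) ≤ (inner ℝ (gradient f (x k) - g k) (g k) : ℝ) := by
        have := abs_real_inner_le_norm (gradient f (x k) - g k) (g k)
        have := neg_abs_le ((inner ℝ (gradient f (x k) - g k) (g k) : ℝ))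
        nlinarith [abs_real_inner_le_norm (gradient f (x k) - g k) (g k)]
      nlinarith [mul_le_mul_of_nonneg_right happrox ha]
    -- apply the descent lemma with v = -(κ/C) • g k
    have hdes := descent_lemma f hf L hL.le hlip (x k) (-((κ / C) • g k))
    have hq : 0 < κ / C := div_pos hκ hCk
    have e4 : x k + -((κ / C) • g k) = x k - (κ / C) • g k := by abel
    have e5 : (inner ℝ (gradient f (x k)) (-((κ / C) • g k)) : ℝ)
        = -((κ / C) * (inner ℝ (gradient f (x k)) (g k) : ℝ)) := by
      rw [inner_neg_right, real_inner_smul_right]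
    have e6 : ‖-((κ / C) • g k)‖ ^ 2 = (κ / C) ^ 2 * a ^ 2 := by
      rw [norm_neg, norm_smul, Real.norm_eq_abs, abs_of_pos hq, mul_pow]
    rw [e4, e5, e6] at hdes
    set I := (inner ℝ (gradient f (x k)) (g k) : ℝ) with hIdef
    -- key polynomial inequality
    have key : -(2 * C * μ) * I + L * κ * μ * a ^ 2 + C * (μ - 2) * a ^ 2 ≤ 0 := by
      have h1 : 2 * C * μ * (a ^ 2 - Ca * d * a) ≤ 2 * C * μ * I :=
        mul_le_mul_of_nonneg_left hI (by positivity)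
      have h2 : 2 * Ca * a * (μ * C * d) ≤ 2 * Ca * a * a :=
        mul_le_mul_of_nonneg_left hglb.le (by positivity)
      have h3 : (2 * Ca + L * κ) * (μ * a ^ 2) ≤ C * (μ * a ^ 2) :=
        mul_le_mul_of_nonneg_right hk (by nlinarith)
      have h5 : 2 * Ca * a ^ 2 * 2 ≤ 2 * Ca * a ^ 2 * μ :=
        mul_le_mul_of_nonneg_left hμ.le (by positivity)
      nlinarith [sq_nonneg a, mul_pos hCa (mul_pos hCk hd)]
    -- translate to the desired inequality
    have hpos : 0 < κ / (2 * C ^ 2 * μ) := by positivity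
    have heq : f (x k) - κ * (μ - 2) / (2 * C * μ) * a ^ 2
        - (f (x k) + -((κ / C) * I) + L / 2 * ((κ / C) ^ 2 * a ^ 2))
        = κ / (2 * C ^ 2 * μ) *
          (-(-(2 * C * μ) * I + L * κ * μ * a ^ 2 + C * (μ - 2) * a ^ 2)) := by
      have hC0 : C ≠ 0 := ne_of_gt hCk
      have hμ0 : μ ≠ 0 := by positivity
      field_simp
      ring
    nlinarith [mul_nonneg hpos.le (neg_nonneg.2 key)]
  -- monotonicity of Cs
  have hmono : Monotone Cs := by
    apply monotone_nat_of_le_succ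
    intro k
    rcases hstep2 k with ⟨_, _, h⟩ | ⟨_, _, h⟩
    · rw [h]
    · rw [h]; nlinarith [hCpos k]
  by_contra hcon
  push_neg at hcon
  -- Cs is unbounded
  have hub : ∀ m : ℕ, ∃ k, r ^ m * Cs 0 ≤ Cs k := by
    intro m
    induction m with
    | zero => exact ⟨0, by simp⟩
    | succ m ih =>
      obtain ⟨k, hk⟩ := ih
      obtain ⟨j, hjk, hj⟩ := hcon k
      rcases hstep2 j with ⟨_, _, h⟩ | ⟨_, _, h⟩
      · exact absurd h hj
      refine ⟨j + 1, ?_⟩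
      rw [h]
      have : Cs k ≤ Cs j := hmono hjk
      have hr0 : (0:ℝ) < r := by linarith
      calc r ^ (m + 1) * Cs 0 = r * (r ^ m * Cs 0) := by ring
        _ ≤ r * Cs j := by nlinarith
  obtain ⟨m, hm⟩ := pow_unbounded_of_one_lt (T / Cs 0) hr
  obtain ⟨k, hk⟩ := hub m
  have hT' : T ≤ Cs k := by
    have h0 : 0 < Cs 0 := hCpos 0
    have : T < r ^ m * Cs 0 := by
      rw [div_lt_iff₀ h0] at hm; linarith
    linarith
  obtain ⟨j, hjk, hj⟩ := hcon k
  exact hj (succ j (le_trans hT' (hmono hjk)))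
end

section
/- Let f : ℝⁿ → ℝ be a C¹-smooth function whose gradient ∇f is globally Lipschitz continuous with some constant L > 0, let 𝒢 be a global approximation of ∇f, and let {x^k}, {g^k}, {δ_k}, {C_k} be the sequences generated by Algorithm DFC with parameters θ ∈ (0,1), μ > 2, r > 1, κ > 0. Assume that ∇f(x^k) ≠ 0 for all k ∈ ℕ and that the sequence {f(x^k)} does not tend to −∞ (equivalently, {f(x^k)} is bounded below). Then ∇f(x^k) → 0 as k → ∞. -/
open Filter Topology


lemma descent {n : ℕ} (f : EuclideanSpace ℝ (Fin n) → ℝ) (hf : ContDiff ℝ 1 f)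
    (L : ℝ) (hL : 0 < L)
    (hlip : ∀ y z : EuclideanSpace ℝ (Fin n),
      ‖gradient f y - gradient f z‖ ≤ L * ‖y - z‖)
    (x v : EuclideanSpace ℝ (Fin n)) :
    f (x + v) ≤ f x + @inner ℝ _ _ (gradient f x) v + L / 2 * ‖v‖ ^ 2 := by
  have hdiff : Differentiable ℝ f := hf.differentiable one_ne_zero
  have hd : ∀ t : ℝ, HasDerivAt (fun t : ℝ => f (x + t • v))
      (@inner ℝ _ _ (gradient f (x + t • v)) v) t := by
    intro t
    have hline : HasDerivAt (fun t : ℝ => x + t • v) v t := by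
      simpa using ((hasDerivAt_id t).smul_const v).const_add x
    have hfd : HasFDerivAt f (InnerProductSpace.toDual ℝ _ (gradient f (x + t • v)))
        (x + t • v) := (hdiff _).hasGradientAt.hasFDerivAt
    have h := hfd.comp_hasDerivAt t hline; simp at h ⊢; exact h
  set ip := @inner ℝ _ _ (gradient f x) v with hip
  set ψ : ℝ → ℝ := fun t => f (x + t • v) - f x - t * ip - L * ‖v‖ ^ 2 * t ^ 2 / 2 with hψ
  have hdψ : ∀ t : ℝ, HasDerivAt ψ
      (@inner ℝ _ _ (gradient f (x + t • v)) v - ip - L * ‖v‖ ^ 2 * t) t := by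
    intro t
    have h1 := (hd t).sub_const (f x)
    have h2 : HasDerivAt (fun t : ℝ => t * ip) ip t := by
      simpa using (hasDerivAt_id t).mul_const ip
    have h3 : HasDerivAt (fun t : ℝ => L * ‖v‖ ^ 2 * t ^ 2 / 2) (L * ‖v‖ ^ 2 * t) t := by
      have := ((hasDerivAt_pow 2 t).const_mul (L * ‖v‖ ^ 2)).div_const 2
      refine this.congr_deriv ?_
      ring
    have h := (h1.sub h2).sub h3; simp [hψ] at h ⊢; exact h
  have hmono : ψ 1 ≤ ψ 0 := by
    have hcont : ContinuousOn ψ (Set.Icc 0 1) := fun t _ => (hdψ t).continuousAt.continuousWithinAt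
    have hderiv : ∀ t ∈ interior (Set.Icc (0:ℝ) 1), deriv ψ t ≤ 0 := by
      intro t ht
      rw [interior_Icc] at ht
      rw [(hdψ t).deriv]
      have hb : @inner ℝ _ _ (gradient f (x + t • v)) v - ip ≤ L * ‖v‖ ^ 2 * t := by
        have := inner_sub_left (𝕜 := ℝ) (gradient f (x + t • v)) (gradient f x) v
        rw [hip, ← this]
        calc @inner ℝ _ _ (gradient f (x + t • v) - gradient f x) v
            ≤ ‖gradient f (x + t • v) - gradient f x‖ * ‖v‖ := real_inner_le_norm _ _
          _ ≤ (L * ‖x + t • v - x‖) * ‖v‖ := by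
              gcongr; exact hlip _ _
          _ = L * ‖v‖ ^ 2 * t := by
              simp [norm_smul, abs_of_pos ht.1]; ring
      linarith
    have := antitoneOn_of_deriv_nonpos (convex_Icc 0 1) hcont
      (fun t ht => ((hdψ t).differentiableAt.differentiableWithinAt)) hderiv
    exact this (by norm_num) (by norm_num) (by norm_num)
  have h0 : ψ 0 = 0 := by simp [hψ]
  have h1 : ψ 1 = f (x + v) - f x - ip - L * ‖v‖ ^ 2 / 2 := by simp [hψ]
  rw [h0, h1] at hmono
  nlinarith [hmono]

lemma success {n : ℕ} (f : EuclideanSpace ℝ (Fin n) → ℝ) (hf : ContDiff ℝ 1 f)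
    (L : ℝ) (hL : 0 < L)
    (hlip : ∀ y z : EuclideanSpace ℝ (Fin n),
      ‖gradient f y - gradient f z‖ ≤ L * ‖y - z‖)
    (μ κ Ca C δ : ℝ) (hμ : 2 < μ) (hκ : 0 < κ) (hCa : 0 < Ca) (hC : 0 < C) (hδ : 0 < δ)
    (x gv : EuclideanSpace ℝ (Fin n))
    (hGb : ‖gv - gradient f x‖ ≤ Ca * δ)
    (hbig : μ * C * δ < ‖gv‖)
    (hCstar : (2 * Ca + L * κ * μ) / (μ + 2) ≤ C) :
    f (x - (κ / C) • gv) ≤ f x - (κ * (μ - 2) / (2 * C * μ)) * ‖gv‖ ^ 2 := by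
  have hμ0 : (0:ℝ) < μ := by linarith
  set a := ‖gv‖ with ha
  have ha0 : 0 < a := lt_of_le_of_lt (by positivity) hbig
  set t := κ / C with htdef
  have ht : 0 < t := by positivity
  have htC : C * t = κ := by rw [htdef]; field_simp
  set s := @inner ℝ _ _ (gradient f x) gv with hs
  -- inner product lower bound
  have h1 : a ^ 2 - Ca * δ * a ≤ s := by
    have e : s = @inner ℝ _ _ gv gv - @inner ℝ _ _ (gv - gradient f x) gv := by
      rw [inner_sub_left, hs]; ring
    have e2 : @inner ℝ _ _ (gv - gradient f x) gv ≤ Ca * δ * a := by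
      calc @inner ℝ _ _ (gv - gradient f x) gv ≤ ‖gv - gradient f x‖ * ‖gv‖ :=
            real_inner_le_norm _ _
        _ ≤ Ca * δ * a := by rw [← ha]; gcongr
    rw [e, real_inner_self_eq_norm_sq, ← ha]
    linarith
  have hA : 2 * Ca + L * κ * μ ≤ (μ + 2) * C := by
    rw [div_le_iff₀ (by linarith)] at hCstar; linarith [hCstar]
  have key : C * (μ - 2) * a ^ 2 ≤ 2 * C * μ * s - L * κ * μ * a ^ 2 := by
    have e1 : 2 * C * μ * (a ^ 2 - Ca * δ * a) ≤ 2 * C * μ * s := by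
      have : (0:ℝ) ≤ 2 * C * μ := by positivity
      exact mul_le_mul_of_nonneg_left h1 this
    have e2 : 2 * Ca * a * (μ * C * δ) ≤ 2 * Ca * a * a := by
      have : (0:ℝ) ≤ 2 * Ca * a := by positivity
      exact mul_le_mul_of_nonneg_left hbig.le this
    nlinarith [mul_le_mul_of_nonneg_right hA (sq_nonneg a)]
  have key2 : (μ - 2) / (2 * μ) * a ^ 2 ≤ s - L * t / 2 * a ^ 2 := by
    have key' : C * (μ - 2) * a ^ 2 ≤ 2 * C * μ * s - L * (C * t) * μ * a ^ 2 := by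
      rw [htC]; exact key
    rw [div_mul_eq_mul_div, div_le_iff₀ (by positivity)]
    nlinarith [key', hC]
  have key3 : t * ((μ - 2) / (2 * μ) * a ^ 2) ≤ t * (s - L * t / 2 * a ^ 2) :=
    mul_le_mul_of_nonneg_left key2 ht.le
  have hdesc := descent f hf L hL hlip x (-(t • gv))
  have hsub : x + -(t • gv) = x - t • gv := by abel
  rw [hsub] at hdesc
  have hinner : @inner ℝ _ _ (gradient f x) (-(t • gv)) = -(t * s) := by
    rw [inner_neg_right, real_inner_smul_right]
  have hnorm : ‖-(t • gv)‖ ^ 2 = t ^ 2 * a ^ 2 := by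
    rw [norm_neg, norm_smul, mul_pow, ← ha]
    simp [abs_of_pos ht, sq_abs]
  rw [hinner, hnorm] at hdesc
  have hcoef : κ * (μ - 2) / (2 * C * μ) = t * ((μ - 2) / (2 * μ)) := by
    rw [htdef]; ring
  rw [hcoef]
  have e : t * (s - L * t / 2 * a ^ 2) = t * s - L / 2 * (t ^ 2 * a ^ 2) := by ring
  have e2 : t * ((μ - 2) / (2 * μ) * a ^ 2) = t * ((μ - 2) / (2 * μ)) * a ^ 2 := by ring
  linarith [key3, hdesc]

/-- For Algorithm DFC applied to a function with globally Lipschitz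
gradient and a global gradient approximation 𝒢, if {f(x^k)} is bounded below then
∇f(x^k) → 0. -/
theorem stmt_11 {n : ℕ} (f : EuclideanSpace ℝ (Fin n) → ℝ) (hf : ContDiff ℝ 1 f)
    (L : ℝ) (hL : 0 < L)
    (hlip : ∀ y z : EuclideanSpace ℝ (Fin n),
      ‖gradient f y - gradient f z‖ ≤ L * ‖y - z‖)
    (G : EuclideanSpace ℝ (Fin n) → ℝ → EuclideanSpace ℝ (Fin n))
    (hG : ∃ C > (0 : ℝ), ∀ y : EuclideanSpace ℝ (Fin n), ∀ δ : ℝ, 0 < δ →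
      ‖G y δ - gradient f y‖ ≤ C * δ)
    (θ μ r κ : ℝ) (hθ : θ ∈ Set.Ioo (0 : ℝ) 1) (hμ : 2 < μ) (hr : 1 < r) (hκ : 0 < κ)
    (x g : ℕ → EuclideanSpace ℝ (Fin n)) (δseq Cs : ℕ → ℝ)
    (hδpos : ∀ k, 0 < δseq k) (hCpos : ∀ k, 0 < Cs k)
    (hstep1 : ∀ k, ∃ i : ℕ, δseq (k + 1) = θ ^ i * δseq k ∧
      g k = G (x k) (δseq (k + 1)) ∧ μ * Cs k * δseq (k + 1) < ‖g k‖)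
    (hstep2 : ∀ k,
      (f (x k - (κ / Cs k) • g k) ≤
          f (x k) - (κ * (μ - 2) / (2 * Cs k * μ)) * ‖g k‖ ^ 2 ∧
        x (k + 1) = x k - (κ / Cs k) • g k ∧ Cs (k + 1) = Cs k) ∨
      (¬ (f (x k - (κ / Cs k) • g k) ≤
          f (x k) - (κ * (μ - 2) / (2 * Cs k * μ)) * ‖g k‖ ^ 2) ∧
        x (k + 1) = x k ∧ Cs (k + 1) = r * Cs k))
    (hgrad : ∀ k, gradient f (x k) ≠ 0)
    (hbelow : ∃ B : ℝ, ∀ k, B ≤ f (x k)) :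
    Tendsto (fun k => gradient f (x k)) atTop (𝓝 0) := by
  obtain ⟨Ca, hCa, hGa⟩ := hG
  have hμ0 : (0 : ℝ) < μ := by linarith
  set Cstar := (2 * Ca + L * κ * μ) / (μ + 2) with hCstardef
  have hCstarpos : 0 < Cstar := by positivity
  -- if Cs k is large enough, the sufficient decrease test passes
  have htest : ∀ k, Cstar ≤ Cs k →
      f (x k - (κ / Cs k) • g k) ≤
        f (x k) - (κ * (μ - 2) / (2 * Cs k * μ)) * ‖g k‖ ^ 2 := by
    intro k hk
    obtain ⟨i, _, hgk, hbig⟩ := hstep1 k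
    exact success f hf L hL hlip μ κ Ca (Cs k) (δseq (k + 1)) hμ hκ hCa (hCpos k)
      (hδpos (k + 1)) (x k) (g k) (by rw [hgk]; exact hGa (x k) _ (hδpos (k + 1))) hbig hk
  -- a failed step implies Cs k < Cstar
  have hfail : ∀ k, ¬ (f (x k - (κ / Cs k) • g k) ≤
        f (x k) - (κ * (μ - 2) / (2 * Cs k * μ)) * ‖g k‖ ^ 2 ∧
      x (k + 1) = x k - (κ / Cs k) • g k ∧ Cs (k + 1) = Cs k) →
      Cs k < Cstar ∧ Cs (k + 1) = r * Cs k := by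
    intro k hk
    rcases hstep2 k with h | ⟨hnot, _, hCr⟩
    · exact absurd h hk
    · refine ⟨?_, hCr⟩
      by_contra h
      push_neg at h
      exact hnot (htest k h)
  -- Cs is monotone
  have hmono : Monotone Cs := by
    apply monotone_nat_of_le_succ
    intro k
    rcases hstep2 k with ⟨_, _, hCe⟩ | ⟨_, _, hCr⟩
    · rw [hCe]
    · rw [hCr]; nlinarith [hCpos k]
  -- Cs is bounded
  have hbd : ∀ k, Cs k ≤ max (Cs 0) (r * Cstar) := by
    intro k
    induction k with
    | zero => exact le_max_left _ _
    | succ k ih =>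
      rcases hstep2 k with ⟨h1, h2, h3⟩ | h
      · rw [h3]; exact ih
      · obtain ⟨hlt, hCr⟩ := hfail k (by tauto)
        rw [hCr]
        refine le_trans ?_ (le_max_right _ _)
        have : (0:ℝ) < r := by linarith
        nlinarith
  -- eventually all steps are successful
  have hK : ∃ K, ∀ k, K ≤ k →
      f (x k - (κ / Cs k) • g k) ≤
          f (x k) - (κ * (μ - 2) / (2 * Cs k * μ)) * ‖g k‖ ^ 2 ∧
        x (k + 1) = x k - (κ / Cs k) • g k ∧ Cs (k + 1) = Cs k := by
    by_contra h
    push_neg at h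
    have hgrow : ∀ j : ℕ, ∃ k, Cs 0 * r ^ j ≤ Cs k := by
      intro j
      induction j with
      | zero => exact ⟨0, by simp⟩
      | succ j ih =>
        obtain ⟨k, hk⟩ := ih
        obtain ⟨k', hk', hfailk'⟩ := h k
        obtain ⟨_, hCr⟩ := hfail k' (by tauto)
        refine ⟨k' + 1, ?_⟩
        rw [hCr]
        have h1 : Cs 0 * r ^ j ≤ Cs k' := le_trans hk (hmono hk')
        have : (0:ℝ) < r := by linarith
        calc Cs 0 * r ^ (j + 1) = r * (Cs 0 * r ^ j) := by ring
          _ ≤ r * Cs k' := by nlinarith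
    obtain ⟨j, hj⟩ := pow_unbounded_of_one_lt (max (Cs 0) (r * Cstar) / Cs 0) hr
    obtain ⟨k, hk⟩ := hgrow j
    rw [div_lt_iff₀ (hCpos 0)] at hj
    have := hbd k
    nlinarith
  obtain ⟨K, hK⟩ := hK
  -- Cs is eventually constant, equal to Cs K
  have hCf : ∀ k, K ≤ k → Cs k = Cs K := by
    intro k hk
    induction k, hk using Nat.le_induction with
    | base => rfl
    | succ k hk ih => rw [(hK k hk).2.2, ih]
  set c := κ * (μ - 2) / (2 * Cs K * μ) with hcdef
  have hc : 0 < c := by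
    have h := hCpos K
    rw [hcdef]
    apply div_pos (by nlinarith) (by positivity)
  have hdec : ∀ k, K ≤ k → f (x (k + 1)) ≤ f (x k) - c * ‖g k‖ ^ 2 := by
    intro k hk
    obtain ⟨h1, h2, _⟩ := hK k hk
    rw [h2, hcdef, ← hCf k hk]
    exact h1
  -- f (x k) is antitone
  have hfa : ∀ k, f (x (k + 1)) ≤ f (x k) := by
    intro k
    rcases hstep2 k with ⟨h1, h2, _⟩ | ⟨_, h2, _⟩
    · rw [h2]
      refine le_trans h1 ?_
      have h3 : 0 ≤ κ * (μ - 2) / (2 * Cs k * μ) * ‖g k‖ ^ 2 := by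
        have h := hCpos k
        apply mul_nonneg (le_of_lt (div_pos (by nlinarith) (by positivity))) (sq_nonneg _)
      linarith
    · rw [h2]
  have hAnti : Antitone fun k => f (x k) := antitone_nat_of_succ_le hfa
  obtain ⟨B, hB⟩ := hbelow
  have hbdd : BddBelow (Set.range fun k => f (x k)) := by
    refine ⟨B, ?_⟩
    rintro y ⟨k, rfl⟩
    exact hB k
  have hconv : Tendsto (fun k => f (x k)) atTop (𝓝 (⨅ k, f (x k))) :=
    tendsto_atTop_ciInf hAnti hbdd
  have hconv' : Tendsto (fun k => f (x (k + 1))) atTop (𝓝 (⨅ k, f (x k))) :=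
    hconv.comp (tendsto_add_atTop_nat 1)
  have hdiff0 : Tendsto (fun k => f (x k) - f (x (k + 1))) atTop (𝓝 0) := by
    simpa using hconv.sub hconv'
  -- ‖g k‖² → 0
  have hsq : Tendsto (fun k => ‖g k‖ ^ 2) atTop (𝓝 0) := by
    apply squeeze_zero' (Eventually.of_forall fun k => by positivity)
      (g := fun k => c⁻¹ * (f (x k) - f (x (k + 1))))
    · filter_upwards [eventually_ge_atTop K] with k hk
      have h1 := hdec k hk
      have h2 : c * ‖g k‖ ^ 2 ≤ f (x k) - f (x (k + 1)) := by linarith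
      calc ‖g k‖ ^ 2 = c⁻¹ * (c * ‖g k‖ ^ 2) := by field_simp
        _ ≤ c⁻¹ * (f (x k) - f (x (k + 1))) :=
            mul_le_mul_of_nonneg_left h2 (inv_nonneg.mpr hc.le)
    · simpa using hdiff0.const_mul c⁻¹
  have hgn : Tendsto (fun k => ‖g k‖) atTop (𝓝 0) := by
    have h := hsq.sqrt
    simp only [Real.sqrt_zero] at h
    convert h using 2 with k
    rw [Real.sqrt_sq (norm_nonneg _)]
  -- conclude
  apply squeeze_zero_norm (a := fun k => (1 + Ca / (μ * Cs 0)) * ‖g k‖)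
  · intro k
    obtain ⟨i, _, hgk, hbig⟩ := hstep1 k
    have hge : ‖g k - gradient f (x k)‖ ≤ Ca * δseq (k + 1) := by
      rw [hgk]; exact hGa (x k) _ (hδpos (k + 1))
    have h1 : ‖gradient f (x k)‖ ≤ ‖g k‖ + Ca * δseq (k + 1) := by
      calc ‖gradient f (x k)‖ = ‖g k - (g k - gradient f (x k))‖ := by congr 1; abel
        _ ≤ ‖g k‖ + ‖g k - gradient f (x k)‖ := norm_sub_le _ _
        _ ≤ ‖g k‖ + Ca * δseq (k + 1) := by linarith
    have h2 : δseq (k + 1) ≤ ‖g k‖ / (μ * Cs 0) := by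
      have h3 : δseq (k + 1) ≤ ‖g k‖ / (μ * Cs k) := by
        have hck := hCpos k
        rw [le_div_iff₀ (by positivity)]
        nlinarith [hbig]
      refine le_trans h3 ?_
      apply div_le_div_of_nonneg_left (norm_nonneg _)
      · have := hCpos 0; positivity
      · have h5 := hmono (Nat.zero_le k)
        have := hCpos 0
        nlinarith
    have h4 : Ca * δseq (k + 1) ≤ Ca / (μ * Cs 0) * ‖g k‖ := by
      have hc0 := hCpos 0
      rw [div_mul_eq_mul_div, le_div_iff₀ (by positivity)]
      calc Ca * δseq (k + 1) * (μ * Cs 0) = Ca * (δseq (k+1) * (μ * Cs 0)) := by ring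
        _ ≤ Ca * ‖g k‖ := by
            have := h2
            rw [le_div_iff₀ (by positivity)] at this
            nlinarith
        _ = Ca * ‖g k‖ := rfl
    nlinarith [h1, h4, norm_nonneg (g k)]
  · simpa using hgn.const_mul (1 + Ca / (μ * Cs 0))
end

section
/- Let f : ℝⁿ → ℝ be a C¹-smooth function whose gradient ∇f is locally Lipschitz continuous (i.e., Lipschitz continuous on every compact subset of ℝⁿ), and let β ∈ (0, 1/2). Then for every nonempty bounded set Ω ⊂ ℝⁿ there exists t̄ > 0 such that f(x − t g) ≤ f(x) − β t ‖g‖² whenever x ∈ Ω, g ∈ ℝⁿ satisfies 2‖g − ∇f(x)‖ ≤ ‖g‖, and t ∈ (0, t̄]. -/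
open Filter Topology

/-- Uniform linesearch lemma: for f with locally Lipschitz gradient and
β ∈ (0,1/2), every nonempty bounded set Ω admits t̄ > 0 such that the sufficient
decrease inequality holds for all x ∈ Ω, all g with 2‖g − ∇f(x)‖ ≤ ‖g‖, and all
t ∈ (0, t̄]. -/
theorem stmt_14 {n : ℕ} (f : EuclideanSpace ℝ (Fin n) → ℝ) (hf : ContDiff ℝ 1 f)
    (hloc : ∀ s : Set (EuclideanSpace ℝ (Fin n)), IsCompact s →
      ∃ L > (0 : ℝ), ∀ y ∈ s, ∀ z ∈ s, ‖gradient f y - gradient f z‖ ≤ L * ‖y - z‖)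
    (β : ℝ) (hβ : β ∈ Set.Ioo (0 : ℝ) (1 / 2))
    (Ω : Set (EuclideanSpace ℝ (Fin n))) (hΩne : Ω.Nonempty)
    (hΩbd : Bornology.IsBounded Ω) :
    ∃ tbar > (0 : ℝ), ∀ x ∈ Ω, ∀ g : EuclideanSpace ℝ (Fin n),
      2 * ‖g - gradient f x‖ ≤ ‖g‖ → ∀ t : ℝ, 0 < t → t ≤ tbar →
        f (x - t • g) ≤ f x - β * t * ‖g‖ ^ 2 := by
  obtain ⟨R, hR⟩ := hΩbd.subset_closedBall 0
  have hS : IsCompact (Metric.closedBall (0 : EuclideanSpace ℝ (Fin n)) (R + 1)) :=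
    isCompact_closedBall _ _
  obtain ⟨L, hL, hLip⟩ := hloc _ hS
  -- bound on gradient over Ω
  have hgradcont : Continuous (gradient f) := by
    have h1 : Continuous (fderiv ℝ f) := hf.continuous_fderiv one_ne_zero
    exact (InnerProductSpace.toDual ℝ (EuclideanSpace ℝ (Fin n))).symm.continuous.comp h1
  obtain ⟨M, hM⟩ := (hΩbd.isCompact_closure).exists_bound_of_continuousOn
    (hgradcont.continuousOn)
  set M0 : ℝ := max M 0 with hM0def
  have hM0 : (0:ℝ) ≤ M0 := le_max_right _ _
  have hMb : ∀ x ∈ Ω, ‖gradient f x‖ ≤ M0 := fun x hx =>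
    (hM x (subset_closure hx)).trans (le_max_left _ _)
  obtain ⟨hβ0, hβ2⟩ := hβ
  refine ⟨min ((1/2 - β)/L) (1/(2*M0+1)),
    lt_min (div_pos (by linarith) hL) (one_div_pos.mpr (by linarith)), ?_⟩
  intro x hx g hg t ht htbar
  have hfd : Differentiable ℝ f := hf.differentiable one_ne_zero
  -- ‖g‖ ≤ 2 M0
  have hgM : ‖g‖ ≤ 2 * M0 := by
    have h1 : ‖g‖ ≤ ‖gradient f x‖ + ‖g - gradient f x‖ := by
      have := norm_add_le (gradient f x) (g - gradient f x)
      simpa using this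
    have h2 := hMb x hx
    linarith
  have hxR : ‖x‖ ≤ R := by
    have := hR hx; simpa using this
  -- ‖t • g‖ ≤ 1
  have htg : ‖t • g‖ ≤ 1 := by
    rw [norm_smul, Real.norm_eq_abs, abs_of_pos ht]
    have h1 : t ≤ 1/(2*M0+1) := htbar.trans (min_le_right _ _)
    have h2 : t * ‖g‖ ≤ (1/(2*M0+1)) * (2*M0) :=
      mul_le_mul h1 hgM (norm_nonneg _) (by positivity)
    have h3 : (1/(2*M0+1)) * (2*M0) ≤ 1 := by
      rw [div_mul_eq_mul_div, one_mul, div_le_one (by positivity)]; linarith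
    linarith
  -- segment ⊆ closed ball
  set y := x - t • g with hy
  have hxS : x ∈ Metric.closedBall (0 : EuclideanSpace ℝ (Fin n)) (R + 1) := by
    simp only [Metric.mem_closedBall, dist_zero_right]; linarith
  have hyS : y ∈ Metric.closedBall (0 : EuclideanSpace ℝ (Fin n)) (R + 1) := by
    simp only [Metric.mem_closedBall, dist_zero_right, hy]
    calc ‖x - t • g‖ ≤ ‖x‖ + ‖t • g‖ := norm_sub_le _ _
      _ ≤ R + 1 := add_le_add hxR htg
  have hseg : segment ℝ x y ⊆ Metric.closedBall (0 : EuclideanSpace ℝ (Fin n)) (R + 1) :=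
    (convex_closedBall _ _).segment_subset hxS hyS
  -- mean value inequality on the segment
  have hC : ∀ z ∈ segment ℝ x y, ‖fderiv ℝ f z - fderiv ℝ f x‖ ≤ L * (t * ‖g‖) := by
    intro z hz
    have hzx : ‖z - x‖ ≤ t * ‖g‖ := by
      obtain ⟨a, b, ha, hb, hab, hz'⟩ := hz
      have : z - x = b • (y - x) := by
        rw [← hz']; match_scalars <;> linarith
      rw [this, norm_smul, Real.norm_eq_abs, abs_of_nonneg hb, hy]
      have : ‖x - t • g - x‖ = t * ‖g‖ := by
        rw [sub_sub_cancel_left, norm_neg, norm_smul, Real.norm_eq_abs, abs_of_pos ht]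
      rw [this]
      nlinarith [mul_nonneg ht.le (norm_nonneg g), hab, ha]
    have heq : ‖fderiv ℝ f z - fderiv ℝ f x‖ = ‖gradient f z - gradient f x‖ := by
      have h1 : fderiv ℝ f z - fderiv ℝ f x
          = InnerProductSpace.toDual ℝ _ (gradient f z - gradient f x) := by
        rw [map_sub]
        simp [gradient, LinearIsometryEquiv.apply_symm_apply]
      rw [h1, LinearIsometryEquiv.norm_map]
    rw [heq]
    calc ‖gradient f z - gradient f x‖ ≤ L * ‖z - x‖ :=
          hLip z (hseg hz) x hxS
      _ ≤ L * (t * ‖g‖) := by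
          exact mul_le_mul_of_nonneg_left hzx hL.le
  have hmv := (convex_segment x y).norm_image_sub_le_of_norm_hasFDerivWithin_le'
    (f' := fun z => fderiv ℝ f z) (φ := fderiv ℝ f x) (C := L * (t * ‖g‖))
    (fun z _ => (hfd z).hasFDerivAt.hasFDerivWithinAt) hC
    (left_mem_segment ℝ x y) (right_mem_segment ℝ x y)
  have hyx : y - x = -(t • g) := by rw [hy]; abel
  have hnyx : ‖y - x‖ = t * ‖g‖ := by
    rw [hyx, norm_neg, norm_smul, Real.norm_eq_abs, abs_of_pos ht]
  -- φ (y - x) = -t * ⟪∇f x, g⟫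
  have h1g : ∀ v, fderiv ℝ f x v = (inner ℝ (gradient f x) v : ℝ) := fun v =>
    (InnerProductSpace.toDual_symm_apply).symm
  have hφ : fderiv ℝ f x (y - x) = -(t * inner ℝ (gradient f x) g) := by
    rw [hyx, map_neg, map_smul, smul_eq_mul, h1g g]
  -- inner product lower bound
  have hinner : ‖g‖^2 / 2 ≤ inner ℝ (gradient f x) g := by
    have h1 : (inner ℝ (gradient f x) g : ℝ) = ‖g‖^2 - inner ℝ (g - gradient f x) g := by
      rw [inner_sub_left, real_inner_self_eq_norm_sq]; ring
    have h2 : (inner ℝ (g - gradient f x) g : ℝ) ≤ ‖g - gradient f x‖ * ‖g‖ :=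
      real_inner_le_norm _ _
    have h3 : ‖g - gradient f x‖ * ‖g‖ ≤ (‖g‖/2) * ‖g‖ :=
      mul_le_mul_of_nonneg_right (by linarith) (norm_nonneg _)
    nlinarith
  -- combine
  have habs : |f y - f x - fderiv ℝ f x (y - x)| ≤ L * (t * ‖g‖) * (t * ‖g‖) := by
    have := hmv
    rwa [hnyx, Real.norm_eq_abs] at this
  have hLt : L * t ≤ 1/2 - β := by
    have h1 : t ≤ (1/2 - β)/L := htbar.trans (min_le_left _ _)
    rw [mul_comm, ← le_div_iff₀ hL]; exact h1
  have hup : f y ≤ f x - t * inner ℝ (gradient f x) g + L * (t*‖g‖) * (t*‖g‖) := by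
    have h := (abs_le.mp habs).2
    rw [hφ] at h
    linarith
  have h1 : t * (‖g‖^2/2) ≤ t * inner ℝ (gradient f x) g :=
    mul_le_mul_of_nonneg_left hinner ht.le
  have h2 : L * t * (t * ‖g‖^2) ≤ (1/2 - β) * (t * ‖g‖^2) :=
    mul_le_mul_of_nonneg_right hLt (mul_nonneg ht.le (sq_nonneg ‖g‖))
  nlinarith [h1, h2]
end
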